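/- arXiv:1507.02497 — 11 statements merged into one kernel-verified Lean document; each statement's English description precedes it below -/
import Mathlib

section
/- Let 𝒜 and ℬ be Grothendieck abelian categories, let π : 𝒜 → 𝒜/𝒮 and π' : ℬ → ℬ/𝒯 be Gabriel localizations with fully faithful right adjoints ω and ω' respectively, and let η : id_𝒜 → ω∘π be the unit of the adjunction π ⊣ ω. Assume 𝒜 has enough projectives. Let F : 𝒜 → ℬ be an additive right exact functor (it preserves finite colimits) such that π'(F(s)) ≅ 0 for every object s of 𝒜 with π(s) ≅ 0, and such that the first left derived functor L₁(π'∘F) satisfies L₁(π'∘F)(s) ≅ 0 for every object s with π(s) ≅ 0. Then for every object a of 𝒜 the morphism (π'∘F)(η_a) : π'(F(a)) → π'(F(ω(π(a)))) is an isomorphism. -/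
/-!
Since `ω` is fully faithful, `π` inverts `η_a`, so the kernel and cokernel of `η_a` are killed
by `π`. Factor `η_a` as `a ↠ I ↪ ω(π a)` and put `G = F ⋙ π'`. As `G` is right exact and kills
`ker η_a`, it inverts `a ↠ I`; as it kills `Z = coker η_a`, `G(I ↪ ω(π a))` is epi. It is also
mono by a dimension shift: for a projective resolution `P` of `Z`, the square from
`ker (P₀ → Z) ↪ P₀` to `I ↪ ω(π a)` is a pushout, `G` preserves it, and `L₁G(Z) = 0` forces
`G(ker (P₀ → Z) ↪ P₀)` to be mono.
-/

open CategoryTheory CategoryTheory.Limits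

universe v u

namespace CategoryTheory

open Category

section Abelian

variable {C : Type*} [Category* C] [Abelian C]

lemma ShortComplex.Exact.mono_of_epi_fac {S : ShortComplex C} (hS : S.Exact) {Y : C}
    {e : S.X₂ ⟶ Y} {i : Y ⟶ S.X₃} [Epi e] (hfe : S.f ≫ e = 0) (hei : e ≫ i = S.g) :
    Mono i := by
  rw [Preadditive.mono_iff_cancel_zero]
  intro T x hx
  obtain ⟨T₁, π₁, _, y, hy⟩ := surjective_up_to_refinements_of_epi e x
  obtain ⟨T₂, π₂, _, z, hz⟩ := hS.exact_up_to_refinements y (by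
    rw [← hei, ← reassoc_of% hy, hx, comp_zero])
  rw [← cancel_epi π₁, ← cancel_epi π₂, comp_zero, comp_zero, hy, reassoc_of% hz, hfe, comp_zero]

lemma ShortComplex.ShortExact.isPushout_of_isIso_τ₃ {S₁ S₂ : ShortComplex C}
    (h₁ : S₁.ShortExact) (h₂ : S₂.ShortExact) (φ : S₁ ⟶ S₂) [IsIso φ.τ₃] :
    IsPushout φ.τ₁ S₁.f S₂.f φ.τ₂ := by
  have sq : CommSq φ.τ₁ S₁.f S₂.f φ.τ₂ := ⟨φ.comm₁₂⟩
  have := h₁.mono_f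
  have := h₁.epi_g
  have := h₂.mono_f
  have hexact : sq.shortComplex.Exact := by
    rw [ShortComplex.exact_iff_exact_up_to_refinements]
    intro A x hx
    dsimp only [CommSq.shortComplex] at x hx ⊢
    have hsum : (x ≫ biprod.fst) ≫ S₂.f + (x ≫ biprod.snd) ≫ φ.τ₂ = 0 := by
      rw [assoc, assoc, ← Preadditive.comp_add, ← biprod.desc_eq]
      exact hx
    have hp : (x ≫ biprod.snd) ≫ S₁.g = 0 := by
      rw [← cancel_mono φ.τ₃, assoc, ← φ.comm₂₃, ← assoc, eq_neg_of_add_eq_zero_right hsum]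
      simp
    set k := h₁.exact.lift _ hp
    refine ⟨A, 𝟙 A, inferInstance, -k, ?_⟩
    rw [id_comp]
    apply biprod.hom_ext
    · rw [← cancel_mono S₂.f, eq_neg_of_add_eq_zero_left hsum]
      simp [φ.comm₁₂, k]
    · simp [k]
  have : Epi sq.shortComplex.g := by
    rw [epi_iff_surjective_up_to_refinements]
    intro A y
    dsimp only [CommSq.shortComplex] at y ⊢
    obtain ⟨A₁, π₁, _, p, hp⟩ := surjective_up_to_refinements_of_epi S₁.g (y ≫ S₂.g ≫ inv φ.τ₃)
    obtain ⟨A₂, π₂, _, a, ha⟩ := h₂.exact.exact_up_to_refinements (π₁ ≫ y - p ≫ φ.τ₂) (by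
      rw [Preadditive.sub_comp, assoc, assoc, φ.comm₂₃, ← reassoc_of% hp]
      simp)
    refine ⟨A₂, π₂ ≫ π₁, inferInstance, biprod.lift a (π₂ ≫ p), ?_⟩
    rw [biprod.lift_desc, assoc, assoc, ← sub_eq_iff_eq_add, ← ha]
    simp
  exact ⟨sq, ⟨sq.isColimitEquivIsColimitCokernelCofork.symm hexact.gIsCokernel⟩⟩

lemma Abelian.shortExact_kernel_ι_factorThruImage {X Y : C} (f : X ⟶ Y) :
    (ShortComplex.mk (kernel.ι f) (Abelian.factorThruImage f)
      (by simp [← cancel_mono (Abelian.image.ι f)])).ShortExact where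
  exact := ShortComplex.exact_of_f_is_kernel _
    (isKernelOfComp _ _ (kernelIsKernel f) _ (Abelian.image.fac f))

lemma Abelian.shortExact_image_ι_cokernel_π {X Y : C} (f : X ⟶ Y) :
    (ShortComplex.mk (Abelian.image.ι f) (cokernel.π f) (kernel.condition _)).ShortExact where
  exact := ShortComplex.exact_of_f_is_kernel _ (kernelIsKernel _)

end Abelian

section Exact

variable {C D : Type*} [Category* C] [Category* D] [Abelian C] [Abelian D] (π : C ⥤ D)

lemma Functor.isZero_obj_kernel_of_isIso_map [PreservesFiniteLimits π] {X Y : C} (f : X ⟶ Y)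
    [IsIso (π.map f)] : IsZero (π.obj (Limits.kernel f)) :=
  (isZero_kernel_of_mono (π.map f)).of_iso (PreservesKernel.iso π f)

lemma Functor.isZero_obj_cokernel_of_isIso_map [PreservesFiniteColimits π] {X Y : C}
    (f : X ⟶ Y) [IsIso (π.map f)] : IsZero (π.obj (cokernel f)) :=
  (isZero_cokernel_of_epi (π.map f)).of_iso (PreservesCokernel.iso π f)

end Exact

section RightExact

variable {C D : Type*} [Category* C] [Category* D] [Abelian C] [Abelian D] (G : C ⥤ D)
  [PreservesFiniteColimits G]

lemma ShortComplex.ShortExact.isIso_map_g_of_isZero {S : ShortComplex C} (hS : S.ShortExact)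
    (h : IsZero (G.obj S.X₁)) : IsIso (G.map S.g) := by
  have := hS.epi_g
  have hG : (S.map G).Exact := hS.exact.map_of_epi_of_preservesCokernel G hS.epi_g inferInstance
  have : Mono (G.map S.g) := hG.mono_g (h.eq_of_src _ _)
  exact isIso_of_mono_of_epi _

lemma ShortComplex.ShortExact.epi_map_f_of_isZero {S : ShortComplex C} (hS : S.ShortExact)
    (h : IsZero (G.obj S.X₃)) : Epi (G.map S.f) :=
  (hS.exact.map_of_epi_of_preservesCokernel G hS.epi_g inferInstance).epi_f (h.eq_of_tgt _ _)

variable [G.Additive] [HasProjectiveResolutions C]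

lemma ProjectiveResolution.mono_map_kernel_ι_of_isZero_leftDerived_one {Z : C}
    (R : ProjectiveResolution Z) (h : IsZero ((G.leftDerived 1).obj Z)) :
    Mono (G.map (kernel.ι (R.π.f 0))) := by
  let e := kernel.lift (R.π.f 0) (R.complex.d 1 0) R.complex_d_comp_π_f_zero
  have : Epi e := R.exact₀.epi_kernelLift
  have hK : (ShortComplex.mk (G.map (R.complex.d 2 1)) (G.map (R.complex.d 1 0))
      (by rw [← G.map_comp, R.complex.d_comp_d, G.map_zero])).Exact := by
    let K := (G.mapHomologicalComplex _).obj R.complex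
    have : K.ExactAt 1 := by
      rw [HomologicalComplex.exactAt_iff_isZero_homology]
      exact h.of_iso (R.isoLeftDerivedObj G 1).symm
    exact (K.exactAt_iff' 2 1 0 (by simp) (by simp)).1 this
  have hde : R.complex.d 2 1 ≫ e = 0 := by
    rw [← cancel_mono (kernel.ι _), assoc, kernel.lift_ι, R.complex.d_comp_d, zero_comp]
  refine hK.mono_of_epi_fac (e := G.map e) ?_ ?_
  · dsimp only
    rw [← G.map_comp, hde, G.map_zero]
  · dsimp only
    rw [← G.map_comp, kernel.lift_ι]

lemma ShortComplex.ShortExact.mono_map_f_of_isZero_leftDerived_one {S : ShortComplex C}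
    (hS : S.ShortExact) (h : IsZero ((G.leftDerived 1).obj S.X₃)) : Mono (G.map S.f) := by
  have := hS.mono_f
  have := hS.epi_g
  let R := projectiveResolution S.X₃
  -- `R.π.f 0` lands in `((single₀ C).obj S.X₃).X 0`; naming `X` lets `Epi S.g` be found
  let q := Projective.factorThru (X := S.X₃) (R.π.f 0) S.g
  have hq : q ≫ S.g = R.π.f 0 := Projective.factorThru_comp _ _
  have hR : (ShortComplex.mk _ _ (kernel.condition (R.π.f 0))).ShortExact :=
    { exact := ShortComplex.exact_of_f_is_kernel _ (kernelIsKernel _) }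
  let φ : ShortComplex.mk _ _ (kernel.condition (R.π.f 0)) ⟶ S :=
    { τ₁ := hS.exact.lift (kernel.ι _ ≫ q) (by rw [assoc, hq]; exact kernel.condition _)
      τ₂ := q
      τ₃ := 𝟙 _
      comm₂₃ := hq.trans (comp_id _).symm }
  have : IsIso φ.τ₃ := inferInstanceAs (IsIso (𝟙 _))
  exact MorphismProperty.of_isPushout (P := .monomorphisms D)
    ((hR.isPushout_of_isIso_τ₃ hS φ).map G) (R.mono_map_kernel_ι_of_isZero_leftDerived_one G h)

lemma ShortComplex.ShortExact.isIso_map_f_of_isZero {S : ShortComplex C} (hS : S.ShortExact)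
    (h₀ : IsZero (G.obj S.X₃)) (h₁ : IsZero ((G.leftDerived 1).obj S.X₃)) :
    IsIso (G.map S.f) :=
  have := hS.mono_map_f_of_isZero_leftDerived_one G h₁
  have := hS.epi_map_f_of_isZero G h₀
  isIso_of_mono_of_epi _

lemma Functor.isIso_map_of_isZero {X Y : C} (f : X ⟶ Y)
    (hK : IsZero (G.obj (Limits.kernel f))) (hC : IsZero (G.obj (cokernel f)))
    (hL : IsZero ((G.leftDerived 1).obj (cokernel f))) : IsIso (G.map f) := by
  have := (Abelian.shortExact_kernel_ι_factorThruImage f).isIso_map_g_of_isZero G hK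
  have := (Abelian.shortExact_image_ι_cokernel_π f).isIso_map_f_of_isZero G hC hL
  rw [← Abelian.image.fac f, G.map_comp]
  infer_instance

end RightExact

end CategoryTheory

theorem stmt0_general
    -- 𝒜 is a Grothendieck abelian category with enough projectives
    (A : Type u) [Category.{v} A] [Abelian A]
    [EnoughProjectives A]
    -- 𝒜/𝒮 is a Grothendieck abelian category
    (QA : Type u) [Category.{v} QA] [Abelian QA]
    -- ℬ is a Grothendieck abelian category
    (B : Type u) [Category.{v} B] [Abelian B]
    -- ℬ/𝒯 is a Grothendieck abelian category
    (QB : Type u) [Category.{v} QB] [Abelian QB]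
    -- π : 𝒜 ⥤ 𝒜/𝒮 is a Gabriel localization: exact with fully faithful right adjoint ω
    (π : A ⥤ QA) [PreservesFiniteLimits π] [PreservesFiniteColimits π]
    (ω : QA ⥤ A) [ω.Full] [ω.Faithful] (adj : π ⊣ ω)
    -- π' : ℬ ⥤ ℬ/𝒯 is a Gabriel localization: exact with fully faithful right adjoint ω'
    (π' : B ⥤ QB) [π'.Additive] [PreservesFiniteColimits π']
    -- F is additive and right exact
    (F : A ⥤ B) [F.Additive] [PreservesFiniteColimits F]
    -- π' ∘ F vanishes on the kernel of π
    (hker : ∀ s : A, IsZero (π.obj s) → IsZero (π'.obj (F.obj s)))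
    -- L₁(π' ∘ F) vanishes on the kernel of π
    (hL1 : ∀ s : A, IsZero (π.obj s) → IsZero (((F ⋙ π').leftDerived 1).obj s)) :
    ∀ a : A, IsIso (π'.map (F.map (adj.unit.app a))) := by
  intro a
  have hK := π.isZero_obj_kernel_of_isIso_map (adj.unit.app a)
  have hC := π.isZero_obj_cokernel_of_isIso_map (adj.unit.app a)
  exact (F ⋙ π').isIso_map_of_isZero _ (hker _ hK) (hker _ hC) (hL1 _ hC)

/-- If `F : 𝒜 ⥤ ℬ` is additive right exact, `π' ∘ F` and its first left
derived functor vanish on the kernel of the Gabriel localization `π`, then for every object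
`a`, `(π' ∘ F)(η_a) : π'(F a) ⟶ π'(F(ω(π a)))` is an isomorphism, where `η` is the unit of
`π ⊣ ω`. -/
theorem stmt0
    -- 𝒜 is a Grothendieck abelian category with enough projectives
    (A : Type u) [Category.{v} A] [Abelian A] [HasColimits A] [AB5 A] [HasSeparator A]
    [EnoughProjectives A]
    -- 𝒜/𝒮 is a Grothendieck abelian category
    (QA : Type u) [Category.{v} QA] [Abelian QA] [HasColimits QA] [AB5 QA] [HasSeparator QA]
    -- ℬ is a Grothendieck abelian category
    (B : Type u) [Category.{v} B] [Abelian B] [HasColimits B] [AB5 B] [HasSeparator B]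
    -- ℬ/𝒯 is a Grothendieck abelian category
    (QB : Type u) [Category.{v} QB] [Abelian QB] [HasColimits QB] [AB5 QB] [HasSeparator QB]
    -- π : 𝒜 ⥤ 𝒜/𝒮 is a Gabriel localization: exact with fully faithful right adjoint ω
    (π : A ⥤ QA) [π.Additive] [PreservesFiniteLimits π] [PreservesFiniteColimits π]
    (ω : QA ⥤ A) [ω.Full] [ω.Faithful] (adj : π ⊣ ω)
    -- π' : ℬ ⥤ ℬ/𝒯 is a Gabriel localization: exact with fully faithful right adjoint ω'
    (π' : B ⥤ QB) [π'.Additive] [PreservesFiniteLimits π'] [PreservesFiniteColimits π']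
    (ω' : QB ⥤ B) [ω'.Full] [ω'.Faithful] (adj' : π' ⊣ ω')
    -- F is additive and right exact
    (F : A ⥤ B) [F.Additive] [PreservesFiniteColimits F]
    -- π' ∘ F vanishes on the kernel of π
    (hker : ∀ s : A, IsZero (π.obj s) → IsZero (π'.obj (F.obj s)))
    -- L₁(π' ∘ F) vanishes on the kernel of π
    (hL1 : ∀ s : A, IsZero (π.obj s) → IsZero (((F ⋙ π').leftDerived 1).obj s)) :
    ∀ a : A, IsIso (π'.map (F.map (adj.unit.app a))) :=
  stmt0_general A QA B QB π ω adj π' F hker hL1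
end

section
/- Let 𝒜 and ℬ be Grothendieck abelian categories, let π : 𝒜 → 𝒜/𝒮 and π' : ℬ → ℬ/𝒯 be Gabriel localizations with fully faithful right adjoints ω and ω'. Assume 𝒜 has enough projectives. Let F : 𝒜 → ℬ be an additive right exact functor such that π'(F(s)) ≅ 0 for every object s with π(s) ≅ 0, and such that L₁(π'∘F)(s) ≅ 0 for every object s with π(s) ≅ 0. Then the functor G := π'∘F∘ω : 𝒜/𝒮 → ℬ/𝒯 satisfies G∘π ≅ π'∘F (natural isomorphism of functors 𝒜 → ℬ/𝒯), and moreover any functor G' : 𝒜/𝒮 → ℬ/𝒯 with G'∘π ≅ π'∘F is naturally isomorphic to G. -/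
open CategoryTheory CategoryTheory.Limits

universe v u

/-!
Since `π` is exact, `π.map f` is invertible exactly when `kernel f` and `cokernel f` lie in
`𝒮 = ker π`. Write `G = π' ∘ F` and factor such an `f` as an epimorphism followed by a
monomorphism. Right exactness of `G` inverts the epimorphism, whose kernel lies in `𝒮`. For the
monomorphism `I ⟶ Y` with cokernel `s ∈ 𝒮`, the exact sequence `L₁G(s) ⟶ G(I) ⟶ G(Y) ⟶ G(s) ⟶ 0`
together with `G(s) = L₁G(s) = 0` does the job. Hence `G` inverts every unit `X ⟶ ω(π X)`, which
gives `π ⋙ ω ⋙ G ≅ G`; uniqueness holds because the counit `π ∘ ω ⟶ 𝟭` is an isomorphism.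
-/

namespace CategoryTheory

variable {C : Type*} [Category C] [Abelian C] {D : Type*} [Category D] [Abelian D]

namespace ShortComplex

lemma isPushout_of_isIso_τ₃ {S₁ S₂ : ShortComplex C} (φ : S₁ ⟶ S₂) (h₁ : S₁.Exact) [Epi S₁.g]
    (h₂ : S₂.ShortExact) [IsIso φ.τ₃] : IsPushout φ.τ₁ S₁.f S₂.f φ.τ₂ := by
  have := h₂.mono_f
  have := h₂.epi_g
  let T := ShortComplex.mk (biprod.lift φ.τ₁ (-S₁.f)) (biprod.desc S₂.f φ.τ₂)
    (by simp [φ.comm₁₂])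
  have hT : T.Exact := by
    rw [exact_iff_exact_up_to_refinements]
    intro A x hx
    have hsum : (x ≫ biprod.fst) ≫ S₂.f = -((x ≫ biprod.snd) ≫ φ.τ₂) := by
      rw [eq_neg_iff_add_eq_zero, ← hx]
      simp [T, biprod.desc_eq]
    have hsnd : (x ≫ biprod.snd) ≫ S₁.g = 0 := by
      rw [← cancel_mono φ.τ₃, Category.assoc, ← φ.comm₂₃, ← Category.assoc, zero_comp,
        ← neg_eq_zero, ← Preadditive.neg_comp, ← hsum]
      simp
    obtain ⟨A', π, hπ, c, hc⟩ := h₁.exact_up_to_refinements _ hsnd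
    refine ⟨A', π, hπ, -c, biprod.hom_ext _ _ ?_ ?_⟩
    · rw [← cancel_mono S₂.f]
      simp [T, hsum, reassoc_of% hc, φ.comm₁₂]
    · simpa [T] using hc
  have : Epi T.g := by
    rw [Preadditive.epi_iff_cancel_zero]
    intro Z t ht
    have hf : S₂.f ≫ t = 0 := by simpa [T] using biprod.inl ≫= ht
    have hτ : φ.τ₂ ≫ t = 0 := by simpa [T] using biprod.inr ≫= ht
    have hdesc : h₂.exact.desc t hf = 0 := by
      rw [← cancel_epi φ.τ₃, ← cancel_epi S₁.g, ← Category.assoc, ← φ.comm₂₃, Category.assoc,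
        h₂.exact.g_desc, hτ, comp_zero, comp_zero]
    rw [← h₂.exact.g_desc t hf, hdesc, comp_zero]
  exact IsPushout.of_isColimit
    ((CommSq.mk φ.comm₁₂).isColimitEquivIsColimitCokernelCofork.symm hT.gIsCokernel)

end ShortComplex

namespace Functor

variable (G : C ⥤ D)

lemma isIso_map_g_of_isZero [PreservesFiniteColimits G] {S : ShortComplex C}
    (hS : S.ShortExact) (h₁ : IsZero (G.obj S.X₁)) : IsIso (G.map S.g) := by
  have := hS.epi_g
  have hG : (S.map G).Exact := hS.exact.map_of_epi_of_preservesCokernel G hS.epi_g inferInstance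
  have : Mono (G.map S.g) := hG.mono_g (h₁.eq_of_src _ _)
  exact isIso_of_mono_of_epi _

variable [G.Additive] [HasProjectiveResolutions C]

lemma kernel_ι_map_d_comp_map_eq_zero {X Y : C} (P : ProjectiveResolution X)
    (hL : IsZero ((G.leftDerived 1).obj X)) (k : P.complex.X 1 ⟶ Y)
    (hk : P.complex.d 2 1 ≫ k = 0) : kernel.ι (G.map (P.complex.d 1 0)) ≫ G.map k = 0 := by
  let K := (G.mapHomologicalComplex (ComplexShape.down ℕ)).obj P.complex
  have hK : (K.sc' 2 1 0).Exact := by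
    rw [← K.exactAt_iff' 2 1 0 (by simp) (by simp), K.exactAt_iff_isZero_homology]
    exact hL.of_iso (P.isoLeftDerivedObj G 1).symm
  have hGk : G.map (P.complex.d 2 1) ≫ G.map k = 0 := by rw [← G.map_comp, hk, G.map_zero]
  rw [← cokernel.π_desc _ _ hGk, ← Category.assoc]
  exact ((ShortComplex.exact_iff_kernel_ι_comp_cokernel_π_zero _).1 hK =≫ _).trans zero_comp

variable [PreservesFiniteColimits G]

lemma mono_map_f_of_isZero_leftDerived_one {S : ShortComplex C} (hS : S.ShortExact)
    (hL : IsZero ((G.leftDerived 1).obj S.X₃)) : Mono (G.map S.f) := by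
  have := hS.mono_f
  have := hS.epi_g
  let P := projectiveResolution S.X₃
  let π₀ : P.complex.X 0 ⟶ S.X₃ := P.π.f 0
  have : Epi π₀ := inferInstanceAs (Epi (P.π.f 0))
  let g : P.complex.X 0 ⟶ S.X₂ := Projective.factorThru π₀ S.g
  let h : P.complex.X 1 ⟶ S.X₁ :=
    hS.exact.lift (P.complex.d 1 0 ≫ g)
      (by rw [Category.assoc, Projective.factorThru_comp]; exact P.complex_d_comp_π_f_zero)
  let φ : ShortComplex.mk (P.complex.d 1 0) π₀ P.complex_d_comp_π_f_zero ⟶ S :=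
    { τ₁ := h, τ₂ := g, τ₃ := 𝟙 S.X₃
      comm₁₂ := by simp [h]
      comm₂₃ := by simp [g] }
  -- In the image under `G` of this pushout square, `kernel (G.map S.f)` is a quotient of
  -- `kernel (G.map (P.complex.d 1 0))`, on which `G.map h` vanishes because `L₁G(S.X₃) = 0`.
  have sq := (ShortComplex.isPushout_of_isIso_τ₃ φ P.exact₀ hS).map G
  have := Abelian.epi_kernel_map_of_isPushout sq.flip
  have hι : kernel.ι (G.map (P.complex.d 1 0)) ≫ G.map h = 0 :=
    G.kernel_ι_map_d_comp_map_eq_zero P hL h (by rw [← cancel_mono S.f]; simp [h])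
  refine Preadditive.mono_of_kernel_zero (zero_of_epi_comp (kernel.map _ _ _ _ sq.flip.w) ?_)
  simpa using hι

lemma isIso_map_f_of_isZero_leftDerived_one {S : ShortComplex C}
    (hS : S.ShortExact) (h₀ : IsZero (G.obj S.X₃)) (h₁ : IsZero ((G.leftDerived 1).obj S.X₃)) :
    IsIso (G.map S.f) := by
  have := G.mono_map_f_of_isZero_leftDerived_one hS h₁
  have hG : (S.map G).Exact := hS.exact.map_of_epi_of_preservesCokernel G hS.epi_g inferInstance
  have : Epi (G.map S.f) := hG.epi_f (h₀.eq_of_tgt _ _)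
  exact isIso_of_mono_of_epi _

lemma isoModSerre_isInvertedBy_of_isZero_leftDerived_one (P : ObjectProperty C) [P.IsSerreClass]
    (h₀ : P ≤ G.kernel)    (h₁ : P ≤ (G.leftDerived 1).kernel) : P.isoModSerre.IsInvertedBy G := by
  intro X Y f hf
  have hp : P (Limits.kernel (Abelian.factorThruImage f)) := hf.1.isoModSerre_factorThruImage.1
  have hm : P (cokernel (Abelian.image.ι f)) := hf.2.isoModSerre_image_ι.2
  have : IsIso (G.map (Abelian.factorThruImage f)) :=
    G.isIso_map_g_of_isZero (S := .mk _ (Abelian.factorThruImage f) (kernel.condition _))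
      { exact := ShortComplex.exact_kernel _ } (h₀ _ hp)
  have : IsIso (G.map (Abelian.image.ι f)) :=
    G.isIso_map_f_of_isZero_leftDerived_one (S := .mk (Abelian.image.ι f) _ (cokernel.condition _))
      { exact := ShortComplex.exact_cokernel _ } (h₀ _ hm) (h₁ _ hm)
  rw [← Abelian.image.fac f, G.map_comp]
  infer_instance

end Functor

end CategoryTheory

theorem stmt1_general
    -- 𝒜 is a Grothendieck abelian category with enough projectives
    (A : Type u) [Category.{v} A] [Abelian A]
    [EnoughProjectives A]
    -- 𝒜/𝒮 is a Grothendieck abelian category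
    (QA : Type u) [Category.{v} QA] [Abelian QA]
    -- ℬ is a Grothendieck abelian category
    (B : Type u) [Category.{v} B] [Abelian B]
    -- ℬ/𝒯 is a Grothendieck abelian category
    (QB : Type u) [Category.{v} QB] [Abelian QB]
    -- π : 𝒜 ⥤ 𝒜/𝒮 is a Gabriel localization: exact with fully faithful right adjoint ω
    (π : A ⥤ QA) [PreservesFiniteLimits π] [PreservesFiniteColimits π]
    (ω : QA ⥤ A) [ω.Full] [ω.Faithful] (adj : π ⊣ ω)
    -- π' : ℬ ⥤ ℬ/𝒯 is a Gabriel localization: exact with fully faithful right adjoint ω'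
    (π' : B ⥤ QB) [π'.Additive] [PreservesFiniteColimits π']
    -- F is additive and right exact
    (F : A ⥤ B) [F.Additive] [PreservesFiniteColimits F]
    -- π' ∘ F vanishes on the kernel of π
    (hker : ∀ s : A, IsZero (π.obj s) → IsZero (π'.obj (F.obj s)))
    -- L₁(π' ∘ F) vanishes on the kernel of π
    (hL1 : ∀ s : A, IsZero (π.obj s) → IsZero (((F ⋙ π').leftDerived 1).obj s))
    :
    Nonempty (π ⋙ (ω ⋙ F ⋙ π') ≅ F ⋙ π') ∧
      ∀ G' : QA ⥤ QB, Nonempty (π ⋙ G' ≅ F ⋙ π') →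
        Nonempty (G' ≅ ω ⋙ F ⋙ π') := by
  have hW : π.kernel.isoModSerre.IsInvertedBy (F ⋙ π') :=
    (F ⋙ π').isoModSerre_isInvertedBy_of_isZero_leftDerived_one π.kernel hker hL1
  have : ∀ X, IsIso ((Functor.whiskerRight adj.unit (F ⋙ π')).app X) := fun X ↦ by
    refine hW _ ?_
    rw [Abelian.isoModSerre_kernel_eq_inverseImage_isomorphisms π]
    exact (inferInstance : IsIso (π.map (adj.unit.app X)))
  have : IsIso (Functor.whiskerRight adj.unit (F ⋙ π')) := NatIso.isIso_of_isIso_app _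
  refine ⟨⟨(asIso (Functor.whiskerRight adj.unit (F ⋙ π'))).symm⟩, fun G' ⟨e⟩ ↦ ⟨?_⟩⟩
  exact G'.leftUnitor.symm ≪≫ Functor.isoWhiskerRight (asIso adj.counit).symm G' ≪≫
    Functor.associator ω π G' ≪≫ Functor.isoWhiskerLeft ω e

/-- Under the hypotheses of the lemma, `G := π' ∘ F ∘ ω` satisfies
`G ∘ π ≅ π' ∘ F`, and any `G'` with `G' ∘ π ≅ π' ∘ F` is naturally isomorphic to `G`. -/
theorem stmt1
    -- 𝒜 is a Grothendieck abelian category with enough projectives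
    (A : Type u) [Category.{v} A] [Abelian A] [HasColimits A] [AB5 A] [HasSeparator A]
    [EnoughProjectives A]
    -- 𝒜/𝒮 is a Grothendieck abelian category
    (QA : Type u) [Category.{v} QA] [Abelian QA] [HasColimits QA] [AB5 QA] [HasSeparator QA]
    -- ℬ is a Grothendieck abelian category
    (B : Type u) [Category.{v} B] [Abelian B] [HasColimits B] [AB5 B] [HasSeparator B]
    -- ℬ/𝒯 is a Grothendieck abelian category
    (QB : Type u) [Category.{v} QB] [Abelian QB] [HasColimits QB] [AB5 QB] [HasSeparator QB]
    -- π : 𝒜 ⥤ 𝒜/𝒮 is a Gabriel localization: exact with fully faithful right adjoint ω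
    (π : A ⥤ QA) [π.Additive] [PreservesFiniteLimits π] [PreservesFiniteColimits π]
    (ω : QA ⥤ A) [ω.Full] [ω.Faithful] (adj : π ⊣ ω)
    -- π' : ℬ ⥤ ℬ/𝒯 is a Gabriel localization: exact with fully faithful right adjoint ω'
    (π' : B ⥤ QB) [π'.Additive] [PreservesFiniteLimits π'] [PreservesFiniteColimits π']
    (ω' : QB ⥤ B) [ω'.Full] [ω'.Faithful] (adj' : π' ⊣ ω')
    -- F is additive and right exact
    (F : A ⥤ B) [F.Additive] [PreservesFiniteColimits F]
    -- π' ∘ F vanishes on the kernel of π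
    (hker : ∀ s : A, IsZero (π.obj s) → IsZero (π'.obj (F.obj s)))
    -- L₁(π' ∘ F) vanishes on the kernel of π
    (hL1 : ∀ s : A, IsZero (π.obj s) → IsZero (((F ⋙ π').leftDerived 1).obj s))
    :
    Nonempty (π ⋙ (ω ⋙ F ⋙ π') ≅ F ⋙ π') ∧
      ∀ G' : QA ⥤ QB, Nonempty (π ⋙ G' ≅ F ⋙ π') →
        Nonempty (G' ≅ ω ⋙ F ⋙ π') :=
  stmt1_general A QA B QB π ω adj π' F hker hL1
end

section
/- Let 𝒜 and ℬ be Grothendieck abelian categories, let π : 𝒜 → 𝒜/𝒮 and π' : ℬ → ℬ/𝒯 be Gabriel localizations with fully faithful right adjoints ω and ω'. Assume 𝒜 has enough projectives. Let F : 𝒜 → ℬ be an additive right exact functor such that π'(F(s)) ≅ 0 for every object s with π(s) ≅ 0, and such that L₁(π'∘F)(s) ≅ 0 for every object s with π(s) ≅ 0. If F preserves small coproducts, then the functor G := π'∘F∘ω : 𝒜/𝒮 → ℬ/𝒯 preserves small coproducts. -/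
/-!
Since `ω` is fully faithful, the counit `π ω ⟶ 𝟭` is an isomorphism, so every diagram in `𝒜/𝒮`
is `π` of a diagram in `𝒜`; as `π` preserves colimits, it suffices that `π' F ω π ≅ π' F`, i.e.
that `G := π' F` inverts every unit component `η_a`. These are inverted by `π`, so their kernels
and cokernels are `π`-torsion. Writing such a map `f` as `a ↠ ker c ↪ b` with
`c : b ⟶ coker f`, right exactness and `G`(torsion) `= 0` make `G` of the first map an
isomorphism and `G` of the second an epimorphism. That `G (ker c ⟶ b)` is also mono is the piece
`L₁G(coker f) ⟶ G(ker c) ⟶ G(b)` of the long exact sequence, recovered by hand from a projective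
resolution of `coker f` and Schanuel's lemma.
-/

open CategoryTheory CategoryTheory.Limits

universe v u

namespace CategoryTheory.Abelian

open Preadditive

section Chase

variable {C : Type*} [Category C] [Abelian C]

theorem mono_of_epi_of_mono_of_exact {K N P I Y : C} {k : K ⟶ P} {q : P ⟶ Y} {hkq : k ≫ q = 0}
    (hex : (ShortComplex.mk k q hkq).Exact) {j : N ⟶ P} [Mono j] {r : N ⟶ I} [Epi r]
    {i : I ⟶ Y} (sq : r ≫ i = j ≫ q) (μ : K ⟶ N) (hμj : μ ≫ j = k) (hμr : μ ≫ r = 0) :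
    Mono i := by
  refine mono_of_cancel_zero _ fun {A} x hx => ?_
  obtain ⟨A₁, π₁, _, y, hy⟩ := surjective_up_to_refinements_of_epi r x
  obtain ⟨A₂, π₂, _, w, hw⟩ := hex.exact_up_to_refinements (y ≫ j) (by
    rw [Category.assoc, ← sq, ← Category.assoc, ← hy, Category.assoc, hx, comp_zero])
  have hyw : π₂ ≫ y = w ≫ μ := by
    rw [← cancel_mono j, Category.assoc, hw, Category.assoc, hμj]
  rw [← cancel_epi (π₂ ≫ π₁), comp_zero, Category.assoc, hy, reassoc_of% hyw, hμr, comp_zero]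

theorem epi_kernel_map_of_epi {P Y T : C} (q : P ⟶ Y) [Epi q] (c : Y ⟶ T) :
    Epi (kernel.map (q ≫ c) c q (𝟙 T) (by simp)) := by
  rw [epi_iff_surjective_up_to_refinements]
  intro A x
  obtain ⟨A', π, _, y, hy⟩ := surjective_up_to_refinements_of_epi q (x ≫ kernel.ι c)
  refine ⟨A', π, inferInstance, kernel.lift _ y ?_, ?_⟩
  · rw [← Category.assoc, ← hy, Category.assoc, Category.assoc, kernel.condition, comp_zero,
      comp_zero]
  · simpa [← cancel_mono (kernel.ι c)] using hy

end Chase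

section Functor

variable {C : Type*} [Category C] [Abelian C] {D : Type*} [Category D] [Abelian D]
  (G : C ⥤ D) [G.Additive]

theorem mono_map_kernel_ι_of_projective {P P' T : C} [Projective P] [Projective P']
    (g : P ⟶ T) (g' : P' ⟶ T) [Epi g] [Epi g'] (h : Mono (G.map (kernel.ι g'))) :
    Mono (G.map (kernel.ι g)) := by
  let α := Projective.factorThru g g'
  let γ := Projective.factorThru g' g
  let β := kernel.map g g' α (𝟙 T) (by simp [α])
  let δ := kernel.map g' g γ (𝟙 T) (by simp [γ])
  let ρ := kernel.lift g (𝟙 P - α ≫ γ) (by simp [α, γ])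
  -- Schanuel's trick: `kernel.ι g` splits off `kernel.ι g'` up to the projective `P`.
  have split : β ≫ δ + kernel.ι g ≫ ρ = 𝟙 _ := by
    rw [← cancel_mono (kernel.ι g)]
    simp [β, δ, ρ]
  refine mono_of_cancel_zero _ fun {A} z hz => ?_
  have hβ : z ≫ G.map β = 0 := by
    rw [← cancel_mono (G.map (kernel.ι g')), Category.assoc, ← G.map_comp, kernel.lift_ι,
      G.map_comp, reassoc_of% hz, zero_comp, zero_comp]
  calc z = z ≫ G.map (β ≫ δ + kernel.ι g ≫ ρ) := by rw [split, G.map_id, Category.comp_id]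
    _ = 0 := by
      rw [G.map_add, comp_add, G.map_comp, G.map_comp, reassoc_of% hβ, reassoc_of% hz,
        zero_comp, zero_comp, add_zero]

variable [PreservesFiniteColimits G]

theorem mono_map_kernel_ι_of_epi_comp {P Y T : C} (q : P ⟶ Y) [Epi q] (c : Y ⟶ T)
    (h : Mono (G.map (kernel.ι (q ≫ c)))) : Mono (G.map (kernel.ι c)) := by
  have hex : ((ShortComplex.mk _ _ (kernel.condition q)).map G).Exact :=
    (ShortComplex.exact_kernel q).map_of_epi_of_preservesCokernel G inferInstance inferInstance
  let r := kernel.map (q ≫ c) c q (𝟙 T) (by simp)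
  let μ := kernel.lift (q ≫ c) (kernel.ι q) (by simp)
  have : Epi r := epi_kernel_map_of_epi q c
  have hμr : μ ≫ r = 0 := by ext; simp [μ, r]
  exact mono_of_epi_of_mono_of_exact hex (j := G.map (kernel.ι (q ≫ c))) (r := G.map r)
    (by simp only [← G.map_comp, r, kernel.lift_ι]) (G.map μ)
    (by simp only [← G.map_comp, μ, kernel.lift_ι]) (by rw [← G.map_comp, hμr, G.map_zero])

variable [EnoughProjectives C]

theorem mono_map_kernel_ι_π_f_zero {T : C} (R : ProjectiveResolution T)
    (hT : IsZero ((G.leftDerived 1).obj T)) : Mono (G.map (kernel.ι (R.π.f 0))) := by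
  have hex : (ShortComplex.mk (G.map (R.complex.d 2 1)) (G.map (R.complex.d 1 0))
      (by rw [← G.map_comp, R.complex.d_comp_d, G.map_zero])).Exact :=
    (HomologicalComplex.exactAt_iff' _ 2 1 0 (by simp) (by simp)).1
      ((HomologicalComplex.exactAt_iff_isZero_homology _ _).2
        (hT.of_iso (R.isoLeftDerivedObj G 1).symm))
  let e := kernel.lift (R.π.f 0) (R.complex.d 1 0) R.complex_d_comp_π_f_zero
  have : Epi e := (ShortComplex.exact_iff_epi_kernel_lift _).1 R.exact₀
  have hde : R.complex.d 2 1 ≫ e = 0 := by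
    rw [← cancel_mono (kernel.ι _), Category.assoc, kernel.lift_ι, R.complex.d_comp_d, zero_comp]
  exact mono_of_epi_of_mono_of_exact hex (j := 𝟙 _) (r := G.map e)
    (by simp only [← G.map_comp, e, kernel.lift_ι, Category.id_comp])
    (G.map (R.complex.d 2 1)) (Category.comp_id _) (by rw [← G.map_comp, hde, G.map_zero])

theorem mono_map_kernel_ι_of_isZero_leftDerived_one {Y T : C} (c : Y ⟶ T) [Epi c]
    (hT : IsZero ((G.leftDerived 1).obj T)) : Mono (G.map (kernel.ι c)) := by
  let R := ProjectiveResolution.of T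
  -- `R.π.f 0` lands in `((ChainComplex.single₀ C).obj T).X 0`, which is `T` only up to unfolding.
  have : @Epi C _ (R.complex.X 0) T (R.π.f 0) := inferInstanceAs (Epi (R.π.f 0))
  exact mono_map_kernel_ι_of_epi_comp G (Projective.π Y) c
    (mono_map_kernel_ι_of_projective G _ (R.π.f 0) (mono_map_kernel_ι_π_f_zero G R hT))

theorem isIso_map_of_isIso_map {Q : Type*} [Category Q] [Abelian Q] (π : C ⥤ Q)
    [PreservesFiniteLimits π] [PreservesFiniteColimits π]
    (hker : ∀ s : C, IsZero (π.obj s) → IsZero (G.obj s))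
    (hL1 : ∀ s : C, IsZero (π.obj s) → IsZero ((G.leftDerived 1).obj s))
    {a b : C} (f : a ⟶ b) [IsIso (π.map f)] : IsIso (G.map f) := by
  let p := Abelian.factorThruImage f
  let i := Abelian.image.ι f
  have hpi : π.map p ≫ π.map i = π.map f := by rw [← π.map_comp, Abelian.image.fac]
  have : Mono (π.map p) := mono_of_mono_fac hpi
  have : IsIso (π.map p) := isIso_of_mono_of_epi _
  have hGp : Mono (G.map p) := by
    have hzero : IsZero (G.obj (kernel p)) :=
      hker _ ((isZero_kernel_of_mono (π.map p)).of_iso (PreservesKernel.iso π p))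
    exact ((ShortComplex.exact_kernel p).map_of_epi_of_preservesCokernel G inferInstance
      inferInstance).mono_g (hzero.eq_of_src _ _)
  have hc : IsZero (π.obj (cokernel f)) :=
    (isZero_cokernel_of_epi (π.map f)).of_iso (PreservesCokernel.iso π f)
  have hGi : Epi (G.map i) :=
    ((ShortComplex.exact_kernel (cokernel.π f)).map_of_epi_of_preservesCokernel G
      inferInstance inferInstance).epi_f ((hker _ hc).eq_of_tgt _ _)
  have : Mono (G.map i) := mono_map_kernel_ι_of_isZero_leftDerived_one G _ (hL1 _ hc)
  have : IsIso (G.map p) := isIso_of_mono_of_epi _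
  have : IsIso (G.map i) := isIso_of_mono_of_epi _
  rw [← Abelian.image.fac f, G.map_comp]
  infer_instance

end Functor

end CategoryTheory.Abelian

namespace CategoryTheory.Adjunction

variable {A Q D : Type*} [Category A] [Category Q] [Category D] {L : A ⥤ Q} {R : Q ⥤ A}
  (adj : L ⊣ R) [R.Full] [R.Faithful] {J : Type*} [Category J] [HasColimitsOfShape J A]

include adj in
theorem preservesColimitsOfShape_of_leftAdjoint_comp (H : Q ⥤ D)
    [PreservesColimitsOfShape J (L ⋙ H)] : PreservesColimitsOfShape J H where
  preservesColimit {K} := by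
    have := adj.leftAdjoint_preservesColimits
    have : PreservesColimit ((K ⋙ R) ⋙ L) H :=
      preservesColimit_of_preserves_colimit_cocone
        (isColimitOfPreserves L (colimit.isColimit (K ⋙ R)))
        (isColimitOfPreserves (L ⋙ H) (colimit.isColimit (K ⋙ R)))
    exact preservesColimit_of_iso_diagram H
      (K.associator R L ≪≫ Functor.isoWhiskerLeft K (asIso adj.counit) ≪≫ K.rightUnitor)

theorem preservesColimitsOfShape_comp_of_isIso_map_unit (H : A ⥤ D)
    [PreservesColimitsOfShape J H] (h : ∀ a, IsIso (H.map (adj.unit.app a))) :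
    PreservesColimitsOfShape J (R ⋙ H) := by
  have : IsIso (Functor.whiskerRight adj.unit H) := (NatTrans.isIso_iff_isIso_app _).2 h
  have : PreservesColimitsOfShape J (L ⋙ R ⋙ H) := preservesColimitsOfShape_of_natIso
    (H.leftUnitor.symm ≪≫ asIso (Functor.whiskerRight adj.unit H) ≪≫ Functor.associator L R H)
  exact adj.preservesColimitsOfShape_of_leftAdjoint_comp (R ⋙ H)

end CategoryTheory.Adjunction

theorem stmt3_general
    -- 𝒜 is a Grothendieck abelian category with enough projectives
    (A : Type u) [Category.{v} A] [Abelian A] [HasColimits A]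
    [EnoughProjectives A]
    -- 𝒜/𝒮 is a Grothendieck abelian category
    (QA : Type u) [Category.{v} QA] [Abelian QA]
    -- ℬ is a Grothendieck abelian category
    (B : Type u) [Category.{v} B] [Abelian B]
    -- ℬ/𝒯 is a Grothendieck abelian category
    (QB : Type u) [Category.{v} QB] [Abelian QB]
    -- π : 𝒜 ⥤ 𝒜/𝒮 is a Gabriel localization: exact with fully faithful right adjoint ω
    (π : A ⥤ QA) [PreservesFiniteLimits π] [PreservesFiniteColimits π]
    (ω : QA ⥤ A) [ω.Full] [ω.Faithful] (adj : π ⊣ ω)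
    -- π' : ℬ ⥤ ℬ/𝒯 is a Gabriel localization: exact with fully faithful right adjoint ω'
    (π' : B ⥤ QB) [π'.Additive]
    (ω' : QB ⥤ B) (adj' : π' ⊣ ω')
    -- F is additive and right exact
    (F : A ⥤ B) [F.Additive] [PreservesFiniteColimits F]
    -- π' ∘ F vanishes on the kernel of π
    (hker : ∀ s : A, IsZero (π.obj s) → IsZero (π'.obj (F.obj s)))
    -- L₁(π' ∘ F) vanishes on the kernel of π
    (hL1 : ∀ s : A, IsZero (π.obj s) → IsZero (((F ⋙ π').leftDerived 1).obj s))
    -- F preserves small coproducts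
    (hF : ∀ ι : Type v, PreservesColimitsOfShape (Discrete ι) F) :
    ∀ ι : Type v, Nonempty (PreservesColimitsOfShape (Discrete ι) (ω ⋙ F ⋙ π')) := by
  intro ι
  have := hF ι
  have := adj'.leftAdjoint_preservesColimits
  exact ⟨adj.preservesColimitsOfShape_comp_of_isIso_map_unit (F ⋙ π')
    fun a => Abelian.isIso_map_of_isIso_map (F ⋙ π') π hker hL1 (adj.unit.app a)⟩

/-- Under the hypotheses of the lemma, if `F` preserves small coproducts
then so does `G := π' ∘ F ∘ ω`. -/
theorem stmt3
    -- 𝒜 is a Grothendieck abelian category with enough projectives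
    (A : Type u) [Category.{v} A] [Abelian A] [HasColimits A] [AB5 A] [HasSeparator A]
    [EnoughProjectives A]
    -- 𝒜/𝒮 is a Grothendieck abelian category
    (QA : Type u) [Category.{v} QA] [Abelian QA] [HasColimits QA] [AB5 QA] [HasSeparator QA]
    -- ℬ is a Grothendieck abelian category
    (B : Type u) [Category.{v} B] [Abelian B] [HasColimits B] [AB5 B] [HasSeparator B]
    -- ℬ/𝒯 is a Grothendieck abelian category
    (QB : Type u) [Category.{v} QB] [Abelian QB] [HasColimits QB] [AB5 QB] [HasSeparator QB]
    -- π : 𝒜 ⥤ 𝒜/𝒮 is a Gabriel localization: exact with fully faithful right adjoint ω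
    (π : A ⥤ QA) [π.Additive] [PreservesFiniteLimits π] [PreservesFiniteColimits π]
    (ω : QA ⥤ A) [ω.Full] [ω.Faithful] (adj : π ⊣ ω)
    -- π' : ℬ ⥤ ℬ/𝒯 is a Gabriel localization: exact with fully faithful right adjoint ω'
    (π' : B ⥤ QB) [π'.Additive] [PreservesFiniteLimits π'] [PreservesFiniteColimits π']
    (ω' : QB ⥤ B) [ω'.Full] [ω'.Faithful] (adj' : π' ⊣ ω')
    -- F is additive and right exact
    (F : A ⥤ B) [F.Additive] [PreservesFiniteColimits F]
    -- π' ∘ F vanishes on the kernel of π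
    (hker : ∀ s : A, IsZero (π.obj s) → IsZero (π'.obj (F.obj s)))
    -- L₁(π' ∘ F) vanishes on the kernel of π
    (hL1 : ∀ s : A, IsZero (π.obj s) → IsZero (((F ⋙ π').leftDerived 1).obj s))
    -- F preserves small coproducts
    (hF : ∀ ι : Type v, PreservesColimitsOfShape (Discrete ι) F) :
    ∀ ι : Type v, Nonempty (PreservesColimitsOfShape (Discrete ι) (ω ⋙ F ⋙ π')) :=
  stmt3_general A QA B QB π ω adj π' ω' adj' F hker hL1 hF
end

section
/- Let 𝒜 and ℬ be Grothendieck abelian categories, let π : 𝒜 → 𝒜/𝒮 and π' : ℬ → ℬ/𝒯 be Gabriel localizations with fully faithful right adjoints ω and ω'. Assume 𝒜 has enough projectives. Let F : 𝒜 → ℬ be an additive right exact functor such that π'(F(s)) ≅ 0 for every object s with π(s) ≅ 0, and such that L₁(π'∘F)(s) ≅ 0 for every object s with π(s) ≅ 0. If F has a right adjoint H : ℬ → 𝒜, then the functor G := π'∘F∘ω : 𝒜/𝒮 → ℬ/𝒯 is left adjoint to the functor π∘H∘ω' : ℬ/𝒯 → 𝒜/𝒮. -/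
open CategoryTheory CategoryTheory.Limits

universe v u

/-!
Put `L := F ⋙ π'` and `R := ω' ⋙ H`, so that `L ⊣ R`. The adjunction restricts along the
reflection `π ⊣ ω` as soon as the unit `η : Z ⟶ ω (π Z)` is invertible at every `Z = R Y`.
Exactness of `π` and invertibility of `π η` show that `π` kills `ker η` and `C := coker η`.
Since `L` kills `ker η`, `Hom(ker η, R Y) ≅ Hom(L (ker η), Y) = 0`, so `η` is mono.
For a projective resolution `P` of `C`, the vanishing of `L₀ C` and `L₁ C` makes
`L P₂ ⟶ L P₁ ⟶ L P₀ ⟶ 0` exact, which by adjunction says `Ext¹(C, R Y) = 0`. Hence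
`0 ⟶ R Y ⟶ ω (π (R Y)) ⟶ C ⟶ 0` splits, and `C` is a retract of `ω (π (R Y))`; but every map
`C ⟶ ω _` vanishes because `π C = 0`, so `C = 0`.
-/

namespace CategoryTheory

lemma Adjunction.eq_zero_of_isZero_obj {C D : Type*} [Category C] [Category D]
    [HasZeroMorphisms C] [HasZeroMorphisms D] {L : C ⥤ D} {R : D ⥤ C} (adj : L ⊣ R)
    {X : C} {Y : D} (hX : IsZero (L.obj X)) (f : X ⟶ R.obj Y) : f = 0 :=
  (adj.homEquiv X Y).symm.injective (hX.eq_of_src _ _)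

section LeftDerived

variable {A B : Type*} [Category A] [Abelian A] [HasProjectiveResolutions A]
  [Category B] [Abelian B] (L : A ⥤ B) [L.Additive] {X : A} (P : ProjectiveResolution X)

lemma ProjectiveResolution.exactAt_map_of_isZero_leftDerived {n : ℕ}
    (h : IsZero ((L.leftDerived n).obj X)) :
    ((L.mapHomologicalComplex _).obj P.complex).ExactAt n :=
  (HomologicalComplex.exactAt_iff_isZero_homology _ _).2
    (h.of_iso (P.isoLeftDerivedObj L n).symm)

lemma ProjectiveResolution.epi_map_d_one_zero [PreservesFiniteColimits L]
    (h : IsZero (L.obj X)) : Epi (L.map (P.complex.d 1 0)) := by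
  have hex := P.exactAt_map_of_isZero_leftDerived L (h.of_iso (L.leftDerivedZeroIsoSelf.app X))
  rw [HomologicalComplex.exactAt_iff' _ 1 0 0 (ChainComplex.prev ℕ 0) ChainComplex.next_nat_zero,
    ShortComplex.exact_iff_epi _
      (((L.mapHomologicalComplex _).obj P.complex).shape 0 0 (by simp))] at hex
  exact hex

lemma ProjectiveResolution.exists_d_comp_eq_of_isZero_leftDerived [PreservesFiniteColimits L]
    {R : B ⥤ A} (adj : L ⊣ R) (h₀ : IsZero (L.obj X)) (h₁ : IsZero ((L.leftDerived 1).obj X))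
    {Y : B} (g : P.complex.X 1 ⟶ R.obj Y) (hg : P.complex.d 2 1 ≫ g = 0) :
    ∃ f : P.complex.X 0 ⟶ R.obj Y, P.complex.d 1 0 ≫ f = g := by
  have hex : (ShortComplex.mk (L.map (P.complex.d 2 1)) (L.map (P.complex.d 1 0))
      (by rw [← L.map_comp, P.complex.d_comp_d, L.map_zero])).Exact :=
    (HomologicalComplex.exactAt_iff' _ 2 1 0 (by simp) (by simp)).1
      (P.exactAt_map_of_isZero_leftDerived L h₁)
  have := P.epi_map_d_one_zero L h₀
  have hg' : L.map (P.complex.d 2 1) ≫ (adj.homEquiv _ _).symm g = 0 := by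
    rw [← adj.homEquiv_naturality_left_symm, hg, adj.homEquiv_symm_apply, L.map_zero, zero_comp]
  refine ⟨adj.homEquiv _ _ (hex.desc ((adj.homEquiv _ _).symm g) hg'), ?_⟩
  rw [← adj.homEquiv_naturality_left, hex.g_desc]
  exact (adj.homEquiv _ _).apply_symm_apply g

end LeftDerived

lemma Abelian.isZero_cokernel_of_exists_d_comp_eq {A : Type*} [Category A] [Abelian A]
    {Z W : A} (η : Z ⟶ W) [Mono η] (hW : ∀ v : cokernel η ⟶ W, v = 0)
    (P : ProjectiveResolution (cokernel η))
    (hext : ∀ g : P.complex.X 1 ⟶ Z, P.complex.d 2 1 ≫ g = 0 →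
      ∃ f : P.complex.X 0 ⟶ Z, P.complex.d 1 0 ≫ f = g) :
    IsZero (cokernel η) := by
  let p : P.complex.X 0 ⟶ cokernel η := P.π.f 0
  have hp : (ShortComplex.mk (P.complex.d 1 0) p P.complex_d_comp_π_f_zero).Exact := P.exact₀
  have : Epi p := inferInstanceAs (Epi (P.π.f 0))
  obtain ⟨u, hu⟩ : ∃ u : P.complex.X 0 ⟶ W, u ≫ cokernel.π η = p :=
    ⟨Projective.factorThru _ _, Projective.factorThru_comp _ _⟩
  have hdu : (P.complex.d 1 0 ≫ u) ≫ cokernel.π η = 0 := by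
    rw [Category.assoc, hu]
    exact P.complex_d_comp_π_f_zero
  obtain ⟨g, hg⟩ : ∃ g : P.complex.X 1 ⟶ Z, g ≫ η = P.complex.d 1 0 ≫ u :=
    ⟨Abelian.monoLift η _ hdu, Abelian.monoLift_comp _ _ _⟩
  obtain ⟨f, hf⟩ := hext g (by
    rw [← cancel_mono η, Category.assoc, hg, HomologicalComplex.d_comp_d_assoc, zero_comp,
      zero_comp])
  have hdv : P.complex.d 1 0 ≫ (u - f ≫ η) = 0 := by
    rw [Preadditive.comp_sub, ← Category.assoc, hf, hg, sub_self]
  have hsplit : hp.desc _ hdv ≫ cokernel.π η = 𝟙 _ := by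
    rw [← cancel_epi p, hp.g_desc_assoc, Preadditive.sub_comp, hu, Category.assoc,
      cokernel.condition, comp_zero, sub_zero, Category.comp_id]
  rw [IsZero.iff_id_eq_zero, ← hsplit, hW (hp.desc _ hdv), zero_comp]

section Localization

variable {A Q : Type*} [Category A] [Abelian A] [Category Q] [Abelian Q]
  {π : A ⥤ Q} {ω : Q ⥤ A} (adj : π ⊣ ω) [ω.Full] [ω.Faithful]

lemma Adjunction.isZero_map_kernel_unit_app [PreservesFiniteLimits π] (Z : A) :
    IsZero (π.obj (kernel (adj.unit.app Z))) :=
  (isZero_zero Q).of_iso (PreservesKernel.iso π _ ≪≫ kernel.ofMono _)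

lemma Adjunction.isZero_map_cokernel_unit_app [PreservesFiniteColimits π] (Z : A) :
    IsZero (π.obj (cokernel (adj.unit.app Z))) :=
  (isZero_zero Q).of_iso (PreservesCokernel.iso π _ ≪≫ cokernel.ofEpi _)

lemma Adjunction.mono_unit_app [PreservesFiniteLimits π] {Z : A}
    (hZ : ∀ K : A, IsZero (π.obj K) → ∀ f : K ⟶ Z, f = 0) : Mono (adj.unit.app Z) :=
  Abelian.mono_of_kernel_ι_eq_zero _ (hZ _ (adj.isZero_map_kernel_unit_app Z) _)

theorem Adjunction.isIso_unit_app_of_isZero_leftDerived [EnoughProjectives A]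
    [PreservesFiniteLimits π] [PreservesFiniteColimits π]
    {B : Type*} [Category B] [Abelian B] {L : A ⥤ B} [L.Additive] [PreservesFiniteColimits L]
    {R : B ⥤ A} (adjLR : L ⊣ R) (h₀ : ∀ s, IsZero (π.obj s) → IsZero (L.obj s))
    (h₁ : ∀ s, IsZero (π.obj s) → IsZero ((L.leftDerived 1).obj s)) (Y : B) :
    IsIso (adj.unit.app (R.obj Y)) := by
  have : Mono (adj.unit.app (R.obj Y)) :=
    adj.mono_unit_app fun K hK f => adjLR.eq_zero_of_isZero_obj (h₀ K hK) f
  have hC := adj.isZero_map_cokernel_unit_app (R.obj Y)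
  have : Epi (adj.unit.app (R.obj Y)) := by
    refine Abelian.epi_of_cokernel_π_eq_zero _ (IsZero.eq_of_tgt ?_ _ _)
    exact Abelian.isZero_cokernel_of_exists_d_comp_eq _ (adj.eq_zero_of_isZero_obj hC)
      (ProjectiveResolution.of _) fun g hg =>
        (ProjectiveResolution.of _).exists_d_comp_eq_of_isZero_leftDerived L adjLR
          (h₀ _ hC) (h₁ _ hC) g hg
  exact isIso_of_mono_of_epi _

end Localization

noncomputable def Adjunction.restrictAlongReflection {A Q D : Type*} [Category A] [Category Q]
    [Category D] {π : A ⥤ Q} {ω : Q ⥤ A} (adj : π ⊣ ω) [ω.Full] [ω.Faithful]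
    {L : A ⥤ D} {R : D ⥤ A} (adjLR : L ⊣ R) [∀ Y, IsIso (adj.unit.app (R.obj Y))] :
    ω ⋙ L ⊣ R ⋙ π :=
  adjLR.restrictFullyFaithful (.ofFullyFaithful ω) (Functor.FullyFaithful.id D)
    (Functor.rightUnitor _).symm
    (NatIso.ofComponents (fun Y => asIso (adj.unit.app (R.obj Y)))
      fun f => adj.unit.naturality (R.map f))

end CategoryTheory

theorem stmt4_general
    -- 𝒜 is a Grothendieck abelian category with enough projectives
    (A : Type u) [Category.{v} A] [Abelian A]
    [EnoughProjectives A]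
    -- 𝒜/𝒮 is a Grothendieck abelian category
    (QA : Type u) [Category.{v} QA] [Abelian QA]
    -- ℬ is a Grothendieck abelian category
    (B : Type u) [Category.{v} B] [Abelian B]
    -- ℬ/𝒯 is a Grothendieck abelian category
    (QB : Type u) [Category.{v} QB] [Abelian QB]
    -- π : 𝒜 ⥤ 𝒜/𝒮 is a Gabriel localization: exact with fully faithful right adjoint ω
    (π : A ⥤ QA) [PreservesFiniteLimits π] [PreservesFiniteColimits π]
    (ω : QA ⥤ A) [ω.Full] [ω.Faithful] (adj : π ⊣ ω)
    -- π' : ℬ ⥤ ℬ/𝒯 is a Gabriel localization: exact with fully faithful right adjoint ω'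
    (π' : B ⥤ QB) [π'.Additive] [PreservesFiniteColimits π']
    (ω' : QB ⥤ B) (adj' : π' ⊣ ω')
    -- F is additive and right exact
    (F : A ⥤ B) [F.Additive] [PreservesFiniteColimits F]
    -- π' ∘ F vanishes on the kernel of π
    (hker : ∀ s : A, IsZero (π.obj s) → IsZero (π'.obj (F.obj s)))
    -- L₁(π' ∘ F) vanishes on the kernel of π
    (hL1 : ∀ s : A, IsZero (π.obj s) → IsZero (((F ⋙ π').leftDerived 1).obj s))
    -- F has a right adjoint H
    (H : B ⥤ A) (adjFH : F ⊣ H) :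
    Nonempty ((ω ⋙ F ⋙ π') ⊣ (ω' ⋙ H ⋙ π)) := by
  let adjLR : F ⋙ π' ⊣ ω' ⋙ H := adjFH.comp adj'
  have := adj.isIso_unit_app_of_isZero_leftDerived adjLR hker hL1
  exact ⟨adj.restrictAlongReflection adjLR⟩

/-- Under the hypotheses of the lemma, if `F ⊣ H` then
`G := π' ∘ F ∘ ω` is left adjoint to `π ∘ H ∘ ω'`. -/
theorem stmt4
    -- 𝒜 is a Grothendieck abelian category with enough projectives
    (A : Type u) [Category.{v} A] [Abelian A] [HasColimits A] [AB5 A] [HasSeparator A]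
    [EnoughProjectives A]
    -- 𝒜/𝒮 is a Grothendieck abelian category
    (QA : Type u) [Category.{v} QA] [Abelian QA] [HasColimits QA] [AB5 QA] [HasSeparator QA]
    -- ℬ is a Grothendieck abelian category
    (B : Type u) [Category.{v} B] [Abelian B] [HasColimits B] [AB5 B] [HasSeparator B]
    -- ℬ/𝒯 is a Grothendieck abelian category
    (QB : Type u) [Category.{v} QB] [Abelian QB] [HasColimits QB] [AB5 QB] [HasSeparator QB]
    -- π : 𝒜 ⥤ 𝒜/𝒮 is a Gabriel localization: exact with fully faithful right adjoint ω
    (π : A ⥤ QA) [π.Additive] [PreservesFiniteLimits π] [PreservesFiniteColimits π]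
    (ω : QA ⥤ A) [ω.Full] [ω.Faithful] (adj : π ⊣ ω)
    -- π' : ℬ ⥤ ℬ/𝒯 is a Gabriel localization: exact with fully faithful right adjoint ω'
    (π' : B ⥤ QB) [π'.Additive] [PreservesFiniteLimits π'] [PreservesFiniteColimits π']
    (ω' : QB ⥤ B) [ω'.Full] [ω'.Faithful] (adj' : π' ⊣ ω')
    -- F is additive and right exact
    (F : A ⥤ B) [F.Additive] [PreservesFiniteColimits F]
    -- π' ∘ F vanishes on the kernel of π
    (hker : ∀ s : A, IsZero (π.obj s) → IsZero (π'.obj (F.obj s)))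
    -- L₁(π' ∘ F) vanishes on the kernel of π
    (hL1 : ∀ s : A, IsZero (π.obj s) → IsZero (((F ⋙ π').leftDerived 1).obj s))
    -- F has a right adjoint H
    (H : B ⥤ A) (adjFH : F ⊣ H) :
    Nonempty ((ω ⋙ F ⋙ π') ⊣ (ω' ⋙ H ⋙ π)) :=
  stmt4_general A QA B QB π ω adj π' ω' adj' F hker hL1 H adjFH
end

section
/- Let 𝒜 and ℬ be Grothendieck abelian categories, let π : 𝒜 → 𝒜/𝒮 and π' : ℬ → ℬ/𝒯 be Gabriel localizations with fully faithful right adjoints ω and ω'. Assume 𝒜 has enough projectives and let F : 𝒜 → ℬ be an additive right exact functor. If there exists a functor G : 𝒜/𝒮 → ℬ/𝒯 with G∘π ≅ π'∘F, then the first left derived functor L₁(π'∘F) vanishes on the kernel of π, i.e. L₁(π'∘F)(s) ≅ 0 for every object s of 𝒜 with π(s) ≅ 0. -/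
/-!
Take a projective resolution `P → s` and let `K = ker (P₀ → s)`. Since `P₂ → P₁ → K → 0` is exact
and `H := π' ∘ F` is right exact, `L₁ H (s)` vanishes as soon as `H` maps `K ↪ P₀` to a
monomorphism. As `π` is left exact and `π s = 0`, `π` maps `K ↪ P₀` to an isomorphism, hence so
does `G ∘ π ≅ H`.
-/

open CategoryTheory CategoryTheory.Limits

universe v u

namespace CategoryTheory

variable {C : Type*} [Category C]

lemma ShortComplex.exact_mk_iff_of_comp_mono [Preadditive C] {X₁ X₂ X₃ Y : C}
    {f : X₁ ⟶ X₂} {g : X₂ ⟶ X₃} {g' : X₂ ⟶ Y} (i : X₃ ⟶ Y) [Mono i] (hg : g ≫ i = g')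
    (hfg : f ≫ g = 0) (hfg' : f ≫ g' = 0) [(ShortComplex.mk f g hfg).HasHomology]
    [(ShortComplex.mk f g' hfg').HasHomology] :
    (ShortComplex.mk f g hfg).Exact ↔ (ShortComplex.mk f g' hfg').Exact :=
  ShortComplex.exact_iff_of_epi_of_isIso_of_mono
    { τ₁ := 𝟙 _, τ₂ := 𝟙 _, τ₃ := i, comm₂₃ := by simpa using hg.symm }

lemma Functor.isIso_map_kernel_ι_of_isZero {D : Type*} [Category D] [Abelian C] [Abelian D]
    (π : C ⥤ D) [PreservesFiniteLimits π] {Y S : C} (f : Y ⟶ S) (hS : IsZero (π.obj S)) :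
    IsIso (π.map (kernel.ι f)) :=
  KernelFork.IsLimit.isIso_ι _ (KernelFork.mapIsLimit _ (kernelIsKernel f) π) (hS.eq_of_tgt _ _)

namespace ProjectiveResolution

variable [Abelian C] {X : C} (P : ProjectiveResolution X)

noncomputable def dToKernel : P.complex.X 1 ⟶ kernel (P.π.f 0) :=
  kernel.lift _ (P.complex.d 1 0) P.complex_d_comp_π_f_zero

@[simp]
lemma dToKernel_comp_ι : P.dToKernel ≫ kernel.ι _ = P.complex.d 1 0 :=
  kernel.lift_ι _ _ _

instance epi_dToKernel : Epi P.dToKernel :=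
  (ShortComplex.mk _ _ P.complex_d_comp_π_f_zero).exact_iff_epi_kernel_lift.1
    (ShortComplex.exact_of_g_is_cokernel _ P.isColimitCokernelCofork)

lemma d_comp_dToKernel : P.complex.d 2 1 ≫ P.dToKernel = 0 := by
  rw [← cancel_mono (kernel.ι _), Category.assoc, dToKernel_comp_ι, HomologicalComplex.d_comp_d,
    zero_comp]

lemma exact_d_dToKernel : (ShortComplex.mk _ _ P.d_comp_dToKernel).Exact :=
  (ShortComplex.exact_mk_iff_of_comp_mono _ P.dToKernel_comp_ι _ _).2 (P.exact_succ 0)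

lemma isZero_leftDerived_one_of_mono [HasProjectiveResolutions C] {D : Type*} [Category D]
    [Abelian D] (H : C ⥤ D) [H.Additive] [PreservesFiniteColimits H]
    [Mono (H.map (kernel.ι (P.π.f 0)))] : IsZero ((H.leftDerived 1).obj X) := by
  refine IsZero.of_iso ((HomologicalComplex.exactAt_iff_isZero_homology _ 1).1 ?_)
    (P.isoLeftDerivedObj H 1)
  rw [HomologicalComplex.exactAt_iff' _ 2 1 0 (by simp) (by simp)]
  have hexact := P.exact_d_dToKernel.map_of_epi_of_preservesCokernel H inferInstance inferInstance
  exact (ShortComplex.exact_mk_iff_of_comp_mono (H.map (kernel.ι _))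
    ((H.map_comp _ _).symm.trans (congrArg H.map P.dToKernel_comp_ι)) _ _).1 hexact

end ProjectiveResolution

end CategoryTheory

theorem stmt5_general
    -- 𝒜 is a Grothendieck abelian category with enough projectives
    (A : Type u) [Category.{v} A] [Abelian A]
    [EnoughProjectives A]
    -- 𝒜/𝒮 is a Grothendieck abelian category
    (QA : Type u) [Category.{v} QA] [Abelian QA]
    -- ℬ is a Grothendieck abelian category
    (B : Type u) [Category.{v} B] [Abelian B]
    -- ℬ/𝒯 is a Grothendieck abelian category
    (QB : Type u) [Category.{v} QB] [Abelian QB]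
    -- π : 𝒜 ⥤ 𝒜/𝒮 is a Gabriel localization: exact with fully faithful right adjoint ω
    (π : A ⥤ QA) [PreservesFiniteLimits π]
    -- π' : ℬ ⥤ ℬ/𝒯 is a Gabriel localization: exact with fully faithful right adjoint ω'
    (π' : B ⥤ QB) [π'.Additive] [PreservesFiniteColimits π']
    -- F is additive and right exact
    (F : A ⥤ B) [F.Additive] [PreservesFiniteColimits F]
    (G : QA ⥤ QB) (hG : Nonempty (π ⋙ G ≅ F ⋙ π')) :
    ∀ s : A, IsZero (π.obj s) → IsZero (((F ⋙ π').leftDerived 1).obj s) := by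
  intro s hs
  obtain ⟨e⟩ := hG
  let P : ProjectiveResolution s := Classical.choice HasProjectiveResolution.out
  have : IsIso (π.map (kernel.ι (P.π.f 0))) := π.isIso_map_kernel_ι_of_isZero _ hs
  have : IsIso ((F ⋙ π').map (kernel.ι (P.π.f 0))) := (NatIso.isIso_map_iff e _).1 (G.map_isIso _)
  exact P.isZero_leftDerived_one_of_mono _

/-- Conversely, if some functor `G : 𝒜/𝒮 ⥤ ℬ/𝒯` satisfies
`G ∘ π ≅ π' ∘ F`, then `L₁(π' ∘ F)` vanishes on the kernel of `π`. -/
theorem stmt5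
    -- 𝒜 is a Grothendieck abelian category with enough projectives
    (A : Type u) [Category.{v} A] [Abelian A] [HasColimits A] [AB5 A] [HasSeparator A]
    [EnoughProjectives A]
    -- 𝒜/𝒮 is a Grothendieck abelian category
    (QA : Type u) [Category.{v} QA] [Abelian QA] [HasColimits QA] [AB5 QA] [HasSeparator QA]
    -- ℬ is a Grothendieck abelian category
    (B : Type u) [Category.{v} B] [Abelian B] [HasColimits B] [AB5 B] [HasSeparator B]
    -- ℬ/𝒯 is a Grothendieck abelian category
    (QB : Type u) [Category.{v} QB] [Abelian QB] [HasColimits QB] [AB5 QB] [HasSeparator QB]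
    -- π : 𝒜 ⥤ 𝒜/𝒮 is a Gabriel localization: exact with fully faithful right adjoint ω
    (π : A ⥤ QA) [π.Additive] [PreservesFiniteLimits π] [PreservesFiniteColimits π]
    (ω : QA ⥤ A) [ω.Full] [ω.Faithful] (adj : π ⊣ ω)
    -- π' : ℬ ⥤ ℬ/𝒯 is a Gabriel localization: exact with fully faithful right adjoint ω'
    (π' : B ⥤ QB) [π'.Additive] [PreservesFiniteLimits π'] [PreservesFiniteColimits π']
    (ω' : QB ⥤ B) [ω'.Full] [ω'.Faithful] (adj' : π' ⊣ ω')
    -- F is additive and right exact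
    (F : A ⥤ B) [F.Additive] [PreservesFiniteColimits F]
    (G : QA ⥤ QB) (hG : Nonempty (π ⋙ G ≅ F ⋙ π')) :
    ∀ s : A, IsZero (π.obj s) → IsZero (((F ⋙ π').leftDerived 1).obj s) :=
  stmt5_general A QA B QB π π' F G hG
end

section
/- Let k be a field and A an ℕ-graded k-algebra with grading A = ⊕_{n∈ℕ} A_n. Let x_1, …, x_s be homogeneous elements of A with deg(x_i) ≤ d for all i, and let J be a two-sided ideal of A which, as a left ideal, is generated by x_1, …, x_s (so J = A·x_1 + ⋯ + A·x_s). Then for every homogeneous element x ∈ J of degree m, every natural number ℓ, and every homogeneous element a ∈ A_n with m + n ≥ ℓ + d, the product x·a lies in the left A-submodule A_{≥ℓ}·x_1 + ⋯ + A_{≥ℓ}·x_s, i.e. x·a = a_1·x_1 + ⋯ + a_s·x_s with each a_i ∈ A_{≥ℓ}. -/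
/-!
Since `J` is two-sided, `y * a ∈ J`, so `y * a = ∑ bᵢ xᵢ` for some `bᵢ ∈ A`. Taking the
homogeneous component of degree `N = m + n` of both sides replaces each `bᵢ` by its component of
degree `N - deg xᵢ`, and `N - deg xᵢ ≥ N - d ≥ ℓ`.
-/

universe u

open DirectSum

section CanonicalOrder

variable {ι κ A σ : Type*} [Semiring A] [DecidableEq ι] [AddCommMonoid ι] [PartialOrder ι]
  [CanonicallyOrderedAdd ι] [Sub ι] [OrderedSub ι] [AddLeftReflectLE ι]
  [SetLike σ A] [AddSubmonoidClass σ A] (𝒜 : ι → σ) [GradedRing 𝒜] [Fintype κ]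

theorem exists_homogeneous_coeffs_of_mem_span {x : κ → A} {dg : κ → ι} {N : ι} {z : A}
    (hx : ∀ i, x i ∈ 𝒜 (dg i)) (hdg : ∀ i, dg i ≤ N) (hz : z ∈ 𝒜 N)
    (hzx : z ∈ Submodule.span A (Set.range x)) :
    ∃ c : κ → A, (∀ i, c i ∈ 𝒜 (N - dg i)) ∧ z = ∑ i, c i * x i := by
  obtain ⟨b, rfl⟩ := (Submodule.mem_span_range_iff_exists_fun A).mp hzx
  refine ⟨fun i => decompose 𝒜 (b i) (N - dg i), fun i => SetLike.coe_mem _, ?_⟩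
  conv_lhs => rw [← decompose_of_mem_same 𝒜 hz]
  rw [decompose_sum, DFinsupp.finsetSum_apply, AddSubmonoidClass.coe_finsetSum]
  exact Finset.sum_congr rfl fun i _ => coe_decompose_mul_of_right_mem_of_le 𝒜 (hx i) (hdg i)

end CanonicalOrder

/-- Let `A` be an `ℕ`-graded `k`-algebra, `x₁, …, x_s` homogeneous elements
of degrees `≤ d`, and `J` a two-sided ideal generated as a left ideal by the `xᵢ`. Then for
every homogeneous `x ∈ J` of degree `m`, every `ℓ`, and every homogeneous `a` of degree `n`
with `m + n ≥ ℓ + d`, one can write `x * a = ∑ i, cᵢ * xᵢ` with each `cᵢ ∈ A_{≥ℓ}`. -/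
theorem stmt6 (k : Type u) [Field k] (A : Type u) [Ring A] [Algebra k A]
    (𝒜 : ℕ → Submodule k A) [GradedAlgebra 𝒜]
    (s : ℕ) (x : Fin s → A) (dg : Fin s → ℕ) (d : ℕ)
    (hx : ∀ i, x i ∈ 𝒜 (dg i)) (hdg : ∀ i, dg i ≤ d)
    -- J is a two-sided ideal of A ...
    (J : Ideal A) (hJtwo : ∀ y ∈ J, ∀ a : A, y * a ∈ J)
    -- ... which, as a left ideal, is generated by x₁, …, x_s
    (hJ : J = Submodule.span A (Set.range x))
    (m ℓ n : ℕ) (y : A) (hyJ : y ∈ J) (hym : y ∈ 𝒜 m)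
    (a : A) (ha : a ∈ 𝒜 n) (hdeg : ℓ + d ≤ m + n) :
    ∃ c : Fin s → A, (∀ i, c i ∈ ⨆ (j : ℕ) (_ : ℓ ≤ j), 𝒜 j) ∧
      y * a = ∑ i, c i * x i := by
  have hle : ∀ i, ℓ + dg i ≤ m + n := fun i => (Nat.add_le_add_left (hdg i) ℓ).trans hdeg
  obtain ⟨c, hc, hsum⟩ := exists_homogeneous_coeffs_of_mem_span 𝒜 hx
    (fun i => le_of_add_le_right (hle i)) (SetLike.mul_mem_graded hym ha)
    (hJ ▸ hJtwo y hyJ a)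
  refine ⟨c, fun i => ?_, hsum⟩
  exact Submodule.mem_iSup_of_mem (m + n - dg i)
    (Submodule.mem_iSup_of_mem (Nat.le_sub_of_add_le (hle i)) (hc i))
end

section
/- Let k be a field and A an ℕ-graded k-algebra with grading A = ⊕_{n∈ℕ} A_n such that dim_k(A_n) < ∞ for all n. Let J be a two-sided ideal of A which, as a left ideal, is generated by finitely many homogeneous elements. Let N be a graded right A-module and M a graded A-submodule of N such that M·J = 0 and such that the quotient module N/M lies in Fdim(A), i.e. every cyclic A-submodule of N/M is finite-dimensional over k. Then the submodule N·J of N lies in Fdim(A), i.e. every element of N·J generates a finite-dimensional A-submodule of N. -/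
/-!
Let `u ∈ N`. Lifting a finite `k`-spanning set of the cyclic submodule of `u + M` gives a
finite-dimensional `V ⊆ N` with `u·A ⊆ V + M`. Since `M·J = 0` and `J = Σ A xᵢ`, this yields
`u·J ⊆ Σ V·xᵢ`, which is finite-dimensional. As `J` is also a right ideal, `(u·a)·A ⊆ u·J` for
`a ∈ J`, and the elements generating finite-dimensional cyclic submodules form a submodule.
-/

universe u

open MulOpposite Submodule

theorem Submodule.exists_fg_le_sup_ker_of_fg_map {R M P : Type*} [Ring R] [AddCommGroup M]
    [Module R M] [AddCommGroup P] [Module R P] (f : M →ₗ[R] P) {U : Submodule R M}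
    (hU : (U.map f).FG) : ∃ V : Submodule R M, V.FG ∧ U ≤ V ⊔ LinearMap.ker f := by
  obtain ⟨S, hS⟩ := hU
  have hSU : (S : Set P) ⊆ f '' U := fun s hs => by
    simpa only [← map_coe, ← hS] using subset_span hs
  obtain ⟨T, -, hT, hTS⟩ := Set.exists_subset_image_finite_and
    (p := fun t => span R t = U.map f) |>.1 ⟨_, hSU, S.finite_toSet, hS⟩
  refine ⟨span R T, fg_span hT, ?_⟩
  rw [← comap_map_eq, map_span, hTS]
  exact le_comap_map f U

section LocallyFinite

variable (k R N : Type*) [Field k] [Ring R] [Algebra k R] [AddCommGroup N] [Module k N]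
  [Module R N] [IsScalarTower k R N]

/-- The largest submodule of `N` lying in `Fdim(R)`. -/
def locallyFinite : Submodule R N where
  carrier := {v | FiniteDimensional k ((span R {v}).restrictScalars k)}
  zero_mem' := by
    show FiniteDimensional k ((span R {0}).restrictScalars k)
    rw [span_zero_singleton, restrictScalars_bot]
    infer_instance
  add_mem' {v w} (hv : FiniteDimensional k _) (hw : FiniteDimensional k _) := by
    have : (span R {v + w}).restrictScalars k ≤
        (span R {v}).restrictScalars k ⊔ (span R {w}).restrictScalars k := by
      rw [← restrictScalars_sup, restrictScalars_le]
      exact span_singleton_le_iff_mem _ _ |>.2 <| add_mem_sup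
        (mem_span_singleton_self v) (mem_span_singleton_self w)
    exact finiteDimensional_of_le this
  smul_mem' r v (hv : FiniteDimensional k _) := finiteDimensional_of_le <|
    restrictScalars_mono k (span_singleton_smul_le R r v)

variable {k R N}

theorem mem_locallyFinite_of_forall_smul_mem {v : N} {W : Submodule k N} [FiniteDimensional k W]
    (hW : ∀ r : R, r • v ∈ W) : v ∈ locallyFinite k R N := by
  refine finiteDimensional_of_le (S₂ := W) fun w hw => ?_
  obtain ⟨r, rfl⟩ := mem_span_singleton.1 hw
  exact hW r

theorem exists_finiteDimensional_smul_mem_sup_of_mk_mem_locallyFinite {M : Submodule R N} {u : N}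
    (hu : Submodule.Quotient.mk u ∈ locallyFinite k R (N ⧸ M)) :
    ∃ V : Submodule k N, FiniteDimensional k V ∧ ∀ r : R, r • u ∈ V ⊔ M.restrictScalars k := by
  have hmap : ((span R {u}).restrictScalars k).map (M.mkQ.restrictScalars k) =
      (span R {Submodule.Quotient.mk u}).restrictScalars k := by
    rw [← restrictScalars_map, map_span]
    simp
  obtain ⟨V, hV, hle⟩ := exists_fg_le_sup_ker_of_fg_map (M.mkQ.restrictScalars k)
    ((fg_iff_finiteDimensional _).2 (by rw [hmap]; exact hu))
  rw [LinearMap.ker_restrictScalars, ker_mkQ] at hle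
  exact ⟨V, (fg_iff_finiteDimensional _).1 hV,
    fun r => hle (smul_mem (span R {u}) r (mem_span_singleton_self u))⟩

theorem smul_smul_mem_map_of_smul_mem_sup {M : Submodule R N} {V : Submodule k N} {u : N}
    (hV : ∀ r : R, r • u ∈ V ⊔ M.restrictScalars k) {y : R} (hy : ∀ m ∈ M, y • m = 0) (r : R) :
    y • r • u ∈ V.map (DistribSMul.toLinearMap k N y) := by
  obtain ⟨v, hv, m, hm, hvm⟩ := mem_sup.1 (hV r)
  rw [← hvm, smul_add, hy m hm, add_zero]
  exact mem_map_of_mem hv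

end LocallyFinite

theorem exists_finiteDimensional_forall_mem_op_smul_mem {k A N : Type*} [Field k] [Ring A]
    [Algebra k A] [AddCommGroup N] [Module k N] [Module Aᵐᵒᵖ N] [IsScalarTower k Aᵐᵒᵖ N]
    {J : Submodule A A} (hJ : J.FG) {M : Submodule Aᵐᵒᵖ N}
    (hMJ : ∀ u ∈ M, ∀ a ∈ J, op a • u = 0) {u : N}
    (hu : Submodule.Quotient.mk u ∈ locallyFinite k Aᵐᵒᵖ (N ⧸ M)) :
    ∃ W : Submodule k N, FiniteDimensional k W ∧ ∀ c ∈ J, op c • u ∈ W := by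
  obtain ⟨s, x, rfl⟩ := fg_iff_exists_fin_generating_family.1 hJ
  obtain ⟨V, _, huV⟩ := exists_finiteDimensional_smul_mem_sup_of_mk_mem_locallyFinite hu
  refine ⟨⨆ i, V.map (DistribSMul.toLinearMap k N (op (x i))), inferInstance, fun c hc => ?_⟩
  obtain ⟨r, rfl⟩ := (mem_span_range_iff_exists_fun A).1 hc
  simp only [Finset.op_sum, Finset.sum_smul, smul_eq_mul, op_mul, mul_smul]
  exact Submodule.sum_mem _ fun i _ => mem_iSup_of_mem i <|
    smul_smul_mem_map_of_smul_mem_sup huV (fun m hm => hMJ m hm _ (subset_span ⟨i, rfl⟩)) _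

theorem stmt7_general (k : Type u) [Field k] (A : Type u) [Ring A] [Algebra k A]
    (𝒜 : ℕ → Submodule k A)
    -- J is a two-sided ideal of A ...
    (J : Ideal A) (hJtwo : ∀ y ∈ J, ∀ a : A, y * a ∈ J)
    -- ... which, as a left ideal, is generated by finitely many homogeneous elements
    (hJgen : ∃ (s : ℕ) (x : Fin s → A) (dg : Fin s → ℕ),
      (∀ i, x i ∈ 𝒜 (dg i)) ∧ J = Submodule.span A (Set.range x))
    -- N is a graded right A-module (a module over Aᵐᵒᵖ, graded compatibly)
    (N : Type u) [AddCommGroup N] [Module k N] [Module Aᵐᵒᵖ N] [IsScalarTower k Aᵐᵒᵖ N]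
    -- M is a graded A-submodule of N
    (M : Submodule Aᵐᵒᵖ N)
    -- M·J = 0
    (hMJ : ∀ u ∈ M, ∀ a ∈ J, op a • u = 0)
    -- every cyclic A-submodule of N/M is finite-dimensional over k
    (hquot : ∀ t : N ⧸ M,
      FiniteDimensional k ((Submodule.span Aᵐᵒᵖ {t}).restrictScalars k)) :
    -- every element of N·J generates a finite-dimensional A-submodule of N
    ∀ v ∈ Submodule.span Aᵐᵒᵖ {w : N | ∃ (u : N) (a : A), a ∈ J ∧ w = op a • u},
      FiniteDimensional k ((Submodule.span Aᵐᵒᵖ {v}).restrictScalars k) := by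
  obtain ⟨s, x, -, -, hJ⟩ := hJgen
  have hJfg : J.FG := hJ ▸ fg_span (Set.finite_range x)
  intro v hv
  refine (span_le (p := locallyFinite k Aᵐᵒᵖ N)).2 ?_ hv
  rintro _ ⟨u, a, ha, rfl⟩
  obtain ⟨W, _, huW⟩ :=
    exists_finiteDimensional_forall_mem_op_smul_mem hJfg hMJ (hquot (Submodule.Quotient.mk u))
  refine SetLike.mem_coe.2 <| mem_locallyFinite_of_forall_smul_mem (W := W) fun b => ?_
  rw [smul_smul, ← op_unop b, ← op_mul]
  exact huW _ (hJtwo a ha _)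

/-- Let `A` be an `ℕ`-graded `k`-algebra with finite-dimensional graded
components and `J` a two-sided ideal generated as a left ideal by finitely many homogeneous
elements.  If `N` is a graded right `A`-module and `M ⊆ N` a graded submodule with `M·J = 0`
such that every cyclic submodule of `N/M` is finite-dimensional over `k`, then every element
of `N·J` generates a finite-dimensional submodule of `N`. -/
theorem stmt7 (k : Type u) [Field k] (A : Type u) [Ring A] [Algebra k A]
    (𝒜 : ℕ → Submodule k A) [GradedAlgebra 𝒜]
    -- dim_k(A_n) < ∞ for all n
    (hfin : ∀ n : ℕ, FiniteDimensional k (𝒜 n))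
    -- J is a two-sided ideal of A ...
    (J : Ideal A) (hJtwo : ∀ y ∈ J, ∀ a : A, y * a ∈ J)
    -- ... which, as a left ideal, is generated by finitely many homogeneous elements
    (hJgen : ∃ (s : ℕ) (x : Fin s → A) (dg : Fin s → ℕ),
      (∀ i, x i ∈ 𝒜 (dg i)) ∧ J = Submodule.span A (Set.range x))
    -- N is a graded right A-module (a module over Aᵐᵒᵖ, graded compatibly)
    (N : Type u) [AddCommGroup N] [Module k N] [Module Aᵐᵒᵖ N] [IsScalarTower k Aᵐᵒᵖ N]
    (𝒩 : ℤ → Submodule k N) [DirectSum.Decomposition 𝒩]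
    (hcompat : ∀ (m : ℤ) (n : ℕ) (u : N) (a : A),
      u ∈ 𝒩 m → a ∈ 𝒜 n → op a • u ∈ 𝒩 (m + n))
    -- M is a graded A-submodule of N
    (M : Submodule Aᵐᵒᵖ N)
    (hMgr : ∀ u ∈ M, ∀ m : ℤ, (DirectSum.decompose 𝒩 u m : N) ∈ M)
    -- M·J = 0
    (hMJ : ∀ u ∈ M, ∀ a ∈ J, op a • u = 0)
    -- every cyclic A-submodule of N/M is finite-dimensional over k
    (hquot : ∀ t : N ⧸ M,
      FiniteDimensional k ((Submodule.span Aᵐᵒᵖ {t}).restrictScalars k)) :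
    -- every element of N·J generates a finite-dimensional A-submodule of N
    ∀ v ∈ Submodule.span Aᵐᵒᵖ {w : N | ∃ (u : N) (a : A), a ∈ J ∧ w = op a • u},
      FiniteDimensional k ((Submodule.span Aᵐᵒᵖ {v}).restrictScalars k) :=
  stmt7_general k A 𝒜 J hJtwo hJgen N M hMJ hquot
end

section
/- Let k be a field and A an ℕ-graded k-algebra with grading A = ⊕_{n∈ℕ} A_n such that dim_k(A_n) < ∞ for all n. Let J be a two-sided ideal of A which, as a left ideal, is generated by finitely many homogeneous elements. Let N be a graded right A-module and M a graded A-submodule of N such that: (i) M·J = 0; (ii) every cyclic A-submodule of N/M is finite-dimensional over k; (iii) M is an essential submodule of N, i.e. every A-submodule P of N with P ∩ M = 0 is zero; and (iv) the only A-submodule of N that is finite-dimensional over k is the zero submodule. Then N·J = 0. -/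
/-!
Write `J = A x₁ + ⋯ + A xₛ`. For `u ∈ N` the right submodule `u·J` is `∑ᵢ (u·A)·xᵢ`. Since `xᵢ`
kills `M`, right multiplication by `xᵢ` factors through `N ⧸ M`, so `(u·A)·xᵢ` is a linear image
of the finite-dimensional cyclic module `(u·A + M)/M`. Hence `u·J` is a finite-dimensional
submodule of `N`, and therefore zero.
-/

universe u

open MulOpposite

open scoped Pointwise

theorem Submodule.finiteDimensional_smul_of_map_mkQ {k R V : Type*} [Field k] [Ring R]
    [Algebra k R] [AddCommGroup V] [Module k V] [Module R V] [IsScalarTower k R V]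
    {M : Submodule R V} {r : R} (hr : ∀ m ∈ M, r • m = 0) (P : Submodule R V)
    (hP : FiniteDimensional k ((P.map M.mkQ).restrictScalars k)) :
    FiniteDimensional k (r • P.restrictScalars k : Submodule k V) := by
  let ψ : V ⧸ M →ₗ[k] V := ((M.restrictScalars k).liftQ (DistribSMul.toLinearMap k V r)
    fun m hm ↦ hr m hm).comp (Quotient.restrictScalarsEquiv k M).symm.toLinearMap
  refine finiteDimensional_of_le (S₂ := ((P.map M.mkQ).restrictScalars k).map ψ) ?_
  rintro _ ⟨v, hv, rfl⟩
  exact ⟨M.mkQ v, mem_map_of_mem hv, rfl⟩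

section RightModule

variable {A N : Type*} [Ring A] [AddCommGroup N] [Module Aᵐᵒᵖ N]

def Submodule.smulRightIdeal (u : N) (J : Ideal A) (hJ : ∀ y ∈ J, ∀ a : A, y * a ∈ J) :
    Submodule Aᵐᵒᵖ N where
  carrier := (fun y : A ↦ op y • u) '' (J : Set A)
  add_mem' := by
    rintro _ _ ⟨y, hy, rfl⟩ ⟨z, hz, rfl⟩
    exact ⟨y + z, J.add_mem hy hz, by simp only [op_add, add_smul]⟩
  zero_mem' := ⟨0, J.zero_mem, by simp⟩
  smul_mem' := by
    rintro b _ ⟨y, hy, rfl⟩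
    exact ⟨y * b.unop, hJ y hy b.unop, by simp only [op_mul, op_unop, mul_smul]⟩

variable {k ι : Type*} [Field k] [Algebra k A] [Module k N] [IsScalarTower k Aᵐᵒᵖ N]

theorem smul_mem_iSup_smul_of_mem_span (x : ι → A) {P : Submodule Aᵐᵒᵖ N} {y : A}
    (hy : y ∈ Submodule.span A (Set.range x)) {v : N} (hv : v ∈ P) :
    op y • v ∈ ⨆ i, op (x i) • P.restrictScalars k := by
  induction hy using Submodule.span_induction generalizing v with
  | mem _ h =>
    obtain ⟨i, rfl⟩ := h
    exact Submodule.mem_iSup_of_mem i (Submodule.smul_mem_pointwise_smul _ _ _ hv)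
  | zero => simp
  | add y z _ _ hy hz =>
    rw [op_add, add_smul]
    exact add_mem (hy hv) (hz hv)
  | smul a y _ h =>
    rw [smul_eq_mul, op_mul, mul_smul]
    exact h (P.smul_mem _ hv)

theorem Submodule.smulRightIdeal_le_iSup_smul (x : ι → A) (u : N)
    (hJ : ∀ y ∈ span A (Set.range x), ∀ a : A, y * a ∈ span A (Set.range x)) :
    (smulRightIdeal u _ hJ).restrictScalars k ≤
      ⨆ i, op (x i) • (span Aᵐᵒᵖ {u}).restrictScalars k := by
  rintro _ ⟨y, hy, rfl⟩
  exact smul_mem_iSup_smul_of_mem_span x hy (mem_span_singleton_self u)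

end RightModule

theorem stmt8_general (k : Type u) [Field k] (A : Type u) [Ring A] [Algebra k A]
    (𝒜 : ℕ → Submodule k A)
    -- J is a two-sided ideal of A ...
    (J : Ideal A) (hJtwo : ∀ y ∈ J, ∀ a : A, y * a ∈ J)
    -- ... which, as a left ideal, is generated by finitely many homogeneous elements
    (hJgen : ∃ (s : ℕ) (x : Fin s → A) (dg : Fin s → ℕ),
      (∀ i, x i ∈ 𝒜 (dg i)) ∧ J = Submodule.span A (Set.range x))
    -- N is a graded right A-module (a module over Aᵐᵒᵖ, graded compatibly)
    (N : Type u) [AddCommGroup N] [Module k N] [Module Aᵐᵒᵖ N] [IsScalarTower k Aᵐᵒᵖ N]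
    -- M is a graded A-submodule of N
    (M : Submodule Aᵐᵒᵖ N)
    -- (i) M·J = 0
    (hMJ : ∀ u ∈ M, ∀ a ∈ J, op a • u = 0)
    -- (ii) every cyclic A-submodule of N/M is finite-dimensional over k
    (hquot : ∀ t : N ⧸ M,
      FiniteDimensional k ((Submodule.span Aᵐᵒᵖ {t}).restrictScalars k))
    -- (iv) the only A-submodule of N that is finite-dimensional over k is the zero submodule
    (hnofd : ∀ P : Submodule Aᵐᵒᵖ N,
      FiniteDimensional k (P.restrictScalars k) → P = ⊥) :
    -- N·J = 0
    ∀ (u : N), ∀ a ∈ J, op a • u = 0 := by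
  intro u a ha
  obtain ⟨s, x, -, -, rfl⟩ := hJgen
  have hcyclic : FiniteDimensional k
      (((Submodule.span Aᵐᵒᵖ {u}).map M.mkQ).restrictScalars k) := by
    rw [Submodule.map_span, Set.image_singleton]
    exact hquot _
  have hfd : ∀ i, FiniteDimensional k
      (op (x i) • (Submodule.span Aᵐᵒᵖ {u}).restrictScalars k : Submodule k N) := fun i ↦
    Submodule.finiteDimensional_smul_of_map_mkQ
      (fun m hm ↦ hMJ m hm _ (Submodule.subset_span ⟨i, rfl⟩)) _ hcyclic
  have huJ := hnofd _
    (Submodule.finiteDimensional_of_le (Submodule.smulRightIdeal_le_iSup_smul x u hJtwo))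
  have hmem : op a • u ∈ Submodule.smulRightIdeal u _ hJtwo := ⟨a, ha, rfl⟩
  rwa [huJ, Submodule.mem_bot] at hmem

/-- Let `A` be an `ℕ`-graded `k`-algebra with finite-dimensional graded
components and `J` a two-sided ideal generated as a left ideal by finitely many homogeneous
elements.  Let `N` be a graded right `A`-module and `M ⊆ N` a graded submodule such that
(i) `M·J = 0`; (ii) every cyclic submodule of `N/M` is finite-dimensional over `k`;
(iii) `M` is essential in `N`; (iv) the only finite-dimensional submodule of `N` is `0`.
Then `N·J = 0`. -/
theorem stmt8 (k : Type u) [Field k] (A : Type u) [Ring A] [Algebra k A]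
    (𝒜 : ℕ → Submodule k A) [GradedAlgebra 𝒜]
    -- dim_k(A_n) < ∞ for all n
    (hfin : ∀ n : ℕ, FiniteDimensional k (𝒜 n))
    -- J is a two-sided ideal of A ...
    (J : Ideal A) (hJtwo : ∀ y ∈ J, ∀ a : A, y * a ∈ J)
    -- ... which, as a left ideal, is generated by finitely many homogeneous elements
    (hJgen : ∃ (s : ℕ) (x : Fin s → A) (dg : Fin s → ℕ),
      (∀ i, x i ∈ 𝒜 (dg i)) ∧ J = Submodule.span A (Set.range x))
    -- N is a graded right A-module (a module over Aᵐᵒᵖ, graded compatibly)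
    (N : Type u) [AddCommGroup N] [Module k N] [Module Aᵐᵒᵖ N] [IsScalarTower k Aᵐᵒᵖ N]
    (𝒩 : ℤ → Submodule k N) [DirectSum.Decomposition 𝒩]
    (hcompat : ∀ (m : ℤ) (n : ℕ) (u : N) (a : A),
      u ∈ 𝒩 m → a ∈ 𝒜 n → op a • u ∈ 𝒩 (m + n))
    -- M is a graded A-submodule of N
    (M : Submodule Aᵐᵒᵖ N)
    (hMgr : ∀ u ∈ M, ∀ m : ℤ, (DirectSum.decompose 𝒩 u m : N) ∈ M)
    -- (i) M·J = 0
    (hMJ : ∀ u ∈ M, ∀ a ∈ J, op a • u = 0)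
    -- (ii) every cyclic A-submodule of N/M is finite-dimensional over k
    (hquot : ∀ t : N ⧸ M,
      FiniteDimensional k ((Submodule.span Aᵐᵒᵖ {t}).restrictScalars k))
    -- (iii) M is an essential submodule of N
    (hess : ∀ P : Submodule Aᵐᵒᵖ N, P ⊓ M = ⊥ → P = ⊥)
    -- (iv) the only A-submodule of N that is finite-dimensional over k is the zero submodule
    (hnofd : ∀ P : Submodule Aᵐᵒᵖ N,
      FiniteDimensional k (P.restrictScalars k) → P = ⊥) :
    -- N·J = 0
    ∀ (u : N), ∀ a ∈ J, op a • u = 0 :=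
  stmt8_general k A 𝒜 J hJtwo hJgen N M hMJ hquot hnofd
end

section
/- Let 𝒞 and 𝒞' be Grothendieck abelian categories, let π : 𝒞 → 𝒬 and π' : 𝒞' → 𝒬' be Gabriel localizations with fully faithful right adjoints ω and ω', and let F : 𝒞' → 𝒞 be an exact, fully faithful functor such that π(F(x)) ≅ 0 for every object x of 𝒞' with π'(x) ≅ 0. Then any functor G : 𝒬' → 𝒬 with G∘π' ≅ π∘F is naturally isomorphic to π∘F∘ω'; in particular the induced functor i_* satisfies i_* ≅ π∘F∘ω'. -/
open CategoryTheory CategoryTheory.Limits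

universe v u

namespace CategoryTheory.Adjunction

variable {C D E : Type*} [Category C] [Category D] [Category E]

noncomputable def isoRightAdjointComp {L : C ⥤ D} {R : D ⥤ C} (adj : L ⊣ R) [IsIso adj.counit]
    {G : D ⥤ E} {H : C ⥤ E} (e : L ⋙ G ≅ H) : G ≅ R ⋙ H :=
  G.leftUnitor.symm ≪≫ Functor.isoWhiskerRight (asIso adj.counit).symm G ≪≫
    Functor.associator R L G ≪≫ Functor.isoWhiskerLeft R e

end CategoryTheory.Adjunction

theorem stmt10_general
    (C : Type u) [Category.{v} C]
    (Q : Type u) [Category.{v} Q]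
    (C' : Type u) [Category.{v} C']
    (Q' : Type u) [Category.{v} Q']
    (π : C ⥤ Q)
    -- π' : 𝒞' ⥤ 𝒬' is a Gabriel localization: exact with fully faithful right adjoint ω'
    (π' : C' ⥤ Q')
    (ω' : Q' ⥤ C') [ω'.Full] [ω'.Faithful] (adj' : π' ⊣ ω')
    (F : C' ⥤ C)
    :
    ∀ G : Q' ⥤ Q, Nonempty (π' ⋙ G ≅ F ⋙ π) → Nonempty (G ≅ ω' ⋙ F ⋙ π) :=
  fun _ ⟨e⟩ => ⟨adj'.isoRightAdjointComp e⟩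

/-- Any functor `G : 𝒬' ⥤ 𝒬` with `G ∘ π' ≅ π ∘ F` is naturally
isomorphic to `π ∘ F ∘ ω'`. -/
theorem stmt10
    -- 𝒞 is a Grothendieck abelian category
    (C : Type u) [Category.{v} C] [Abelian C] [HasColimits C] [AB5 C] [HasSeparator C]
    -- 𝒬 is a Grothendieck abelian category
    (Q : Type u) [Category.{v} Q] [Abelian Q] [HasColimits Q] [AB5 Q] [HasSeparator Q]
    -- 𝒞' is a Grothendieck abelian category
    (C' : Type u) [Category.{v} C'] [Abelian C'] [HasColimits C'] [AB5 C'] [HasSeparator C']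
    -- 𝒬' is a Grothendieck abelian category
    (Q' : Type u) [Category.{v} Q'] [Abelian Q'] [HasColimits Q'] [AB5 Q'] [HasSeparator Q']
    -- π : 𝒞 ⥤ 𝒬 is a Gabriel localization: exact with fully faithful right adjoint ω
    (π : C ⥤ Q) [π.Additive] [PreservesFiniteLimits π] [PreservesFiniteColimits π]
    (ω : Q ⥤ C) [ω.Full] [ω.Faithful] (adj : π ⊣ ω)
    -- π' : 𝒞' ⥤ 𝒬' is a Gabriel localization: exact with fully faithful right adjoint ω'
    (π' : C' ⥤ Q') [π'.Additive] [PreservesFiniteLimits π'] [PreservesFiniteColimits π']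
    (ω' : Q' ⥤ C') [ω'.Full] [ω'.Faithful] (adj' : π' ⊣ ω')
    -- F : 𝒞' ⥤ 𝒞 is exact and fully faithful
    (F : C' ⥤ C) [F.Additive] [PreservesFiniteLimits F] [PreservesFiniteColimits F]
    [F.Full] [F.Faithful]
    -- π ∘ F vanishes on the kernel of π'
    (hker : ∀ x : C', IsZero (π'.obj x) → IsZero (π.obj (F.obj x)))
    :
    ∀ G : Q' ⥤ Q, Nonempty (π' ⋙ G ≅ F ⋙ π) → Nonempty (G ≅ ω' ⋙ F ⋙ π) :=
  stmt10_general C Q C' Q' π π' ω' adj' F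
end

section
/- Let 𝒞 and 𝒞' be Grothendieck abelian categories, let π : 𝒞 → 𝒬 and π' : 𝒞' → 𝒬' be Gabriel localizations with fully faithful right adjoints ω and ω', and let F : 𝒞' → 𝒞 be an exact, fully faithful functor such that π(F(x)) ≅ 0 for every object x of 𝒞' with π'(x) ≅ 0. Assume: (ii) there is a natural isomorphism ω∘π∘F ≅ F∘ω'∘π' of functors 𝒞' → 𝒞; and (iii) the essential image of F is closed under subobjects and quotient objects in 𝒞. Then the essential image of i_* := π∘F∘ω' : 𝒬' → 𝒬 is closed under subobjects and quotient objects in 𝒬: for every object M of 𝒬' and every short exact sequence 0 → L → i_*(M) → N → 0 in 𝒬, both L and N are isomorphic to objects in the essential image of i_*. -/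
/-!
Write `i_* = π ∘ F ∘ ω'`. Since `π'` inverts the unit `x ⟶ ω' π' x` and `π ∘ F` kills everything
`π'` kills, exactness makes `π ∘ F` invert that unit too; hence every `π (F x)` lies in the
essential image of `i_*`. Given `0 → L → i_* M → N → 0`, the right adjoint `ω` keeps `ω L` a
subobject of `ω (i_* M) ≅ F (ω' M)` (this is (ii)), so `ω L ≅ F x` by (iii) and
`L ≅ π ω L ≅ π (F x)`. Dually the cokernel of `ω L ⟶ ω (i_* M)` is a quotient of `F (ω' M)`,
hence some `F y`, and applying the exact functor `π` to it recovers `N ≅ π (F y)`.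
-/

open CategoryTheory CategoryTheory.Limits

universe v u

namespace CategoryTheory.Functor

variable {A B D : Type*} [Category A] [Category B] [Category D] [Abelian A] [Abelian B]
  [Abelian D]

lemma isZero_obj_kernel_iff_mono_map (G : A ⥤ B) [PreservesFiniteLimits G] {X Y : A}
    (φ : X ⟶ Y) : IsZero (G.obj (Limits.kernel φ)) ↔ Mono (G.map φ) :=
  (PreservesKernel.iso G φ).isZero_iff.trans (Preadditive.mono_iff_isZero_kernel _).symm

lemma isZero_obj_cokernel_iff_epi_map (G : A ⥤ B) [PreservesFiniteColimits G] {X Y : A}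
    (φ : X ⟶ Y) : IsZero (G.obj (cokernel φ)) ↔ Epi (G.map φ) :=
  (PreservesCokernel.iso G φ).isZero_iff.trans (Preadditive.epi_iff_isZero_cokernel _).symm

lemma isIso_map_of_isIso_map_of_isZero (G : A ⥤ B) (H : A ⥤ D)
    [PreservesFiniteLimits G] [PreservesFiniteColimits G]
    [PreservesFiniteLimits H] [PreservesFiniteColimits H]
    (hGH : ∀ X, IsZero (G.obj X) → IsZero (H.obj X)) {X Y : A} (φ : X ⟶ Y) [IsIso (G.map φ)] :
    IsIso (H.map φ) := by
  have : Mono (H.map φ) := (isZero_obj_kernel_iff_mono_map H φ).1 <|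
    hGH _ ((isZero_obj_kernel_iff_mono_map G φ).2 inferInstance)
  have : Epi (H.map φ) := (isZero_obj_cokernel_iff_epi_map H φ).1 <|
    hGH _ ((isZero_obj_cokernel_iff_epi_map G φ).2 inferInstance)
  exact isIso_of_mono_of_epi _

end CategoryTheory.Functor

namespace CategoryTheory.Adjunction

variable {C Q E : Type*} [Category C] [Category Q] [Category E]
  {π : C ⥤ Q} {ω : Q ⥤ C}

lemma essImage_le_essImage_rightAdjoint_comp (adj : π ⊣ ω) (H : C ⥤ E)
    (hH : ∀ x, IsIso (H.map (adj.unit.app x))) : H.essImage ≤ (ω ⋙ H).essImage := by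
  rintro Z ⟨x, ⟨e⟩⟩
  exact ⟨π.obj x, ⟨(asIso (H.map (adj.unit.app x))).symm ≪≫ e⟩⟩

variable [ω.Full] [ω.Faithful]

lemma mem_essImage_comp_leftAdjoint (adj : π ⊣ ω) {C' : Type*} [Category C'] (F : C' ⥤ C)
    {Z : Q} (hZ : F.essImage (ω.obj Z)) : (F ⋙ π).essImage Z := by
  obtain ⟨x, ⟨e⟩⟩ := hZ
  exact ⟨x, ⟨π.mapIso e ≪≫ asIso (adj.counit.app Z)⟩⟩

noncomputable def leftAdjointObjCokernelMapIso (adj : π ⊣ ω) [Abelian C] [Abelian Q]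
    [PreservesFiniteColimits π] {Z Y : Q} (f : Z ⟶ Y) :
    π.obj (cokernel (ω.map f)) ≅ cokernel f :=
  PreservesCokernel.iso π (ω.map f) ≪≫
    cokernel.mapIso _ f (asIso (adj.counit.app Z)) (asIso (adj.counit.app Y))
      (adj.counit.naturality f)

end CategoryTheory.Adjunction

open Adjunction Functor in
theorem stmt12_general
    -- 𝒞 is a Grothendieck abelian category
    (C : Type u) [Category.{v} C] [Abelian C]
    -- 𝒬 is a Grothendieck abelian category
    (Q : Type u) [Category.{v} Q] [Abelian Q]
    -- 𝒞' is a Grothendieck abelian category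
    (C' : Type u) [Category.{v} C'] [Abelian C']
    -- 𝒬' is a Grothendieck abelian category
    (Q' : Type u) [Category.{v} Q'] [Abelian Q']
    -- π : 𝒞 ⥤ 𝒬 is a Gabriel localization: exact with fully faithful right adjoint ω
    (π : C ⥤ Q) [PreservesFiniteLimits π] [PreservesFiniteColimits π]
    (ω : Q ⥤ C) [ω.Full] [ω.Faithful] (adj : π ⊣ ω)
    -- π' : 𝒞' ⥤ 𝒬' is a Gabriel localization: exact with fully faithful right adjoint ω'
    (π' : C' ⥤ Q') [PreservesFiniteLimits π'] [PreservesFiniteColimits π']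
    (ω' : Q' ⥤ C') [ω'.Full] [ω'.Faithful] (adj' : π' ⊣ ω')
    -- F : 𝒞' ⥤ 𝒞 is exact and fully faithful
    (F : C' ⥤ C) [PreservesFiniteLimits F] [PreservesFiniteColimits F]
    -- π ∘ F vanishes on the kernel of π'
    (hker : ∀ x : C', IsZero (π'.obj x) → IsZero (π.obj (F.obj x)))
    -- (ii) ω ∘ π ∘ F ≅ F ∘ ω' ∘ π' as functors 𝒞' ⥤ 𝒞
    (hsat : Nonempty (F ⋙ π ⋙ ω ≅ π' ⋙ ω' ⋙ F))
    -- (iii) the essential image of F is closed under subobjects and quotient objects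
    (hsub : ∀ (x : C') (L : C) (f : L ⟶ F.obj x), Mono f → F.essImage L)
    (hquot : ∀ (x : C') (N : C) (g : F.obj x ⟶ N), Epi g → F.essImage N) :
    ∀ (M : Q') (L N : Q) (f : L ⟶ (ω' ⋙ F ⋙ π).obj M) (g : (ω' ⋙ F ⋙ π).obj M ⟶ N)
      (w : f ≫ g = 0), (ShortComplex.mk f g w).ShortExact →
        (ω' ⋙ F ⋙ π).essImage L ∧ (ω' ⋙ F ⋙ π).essImage N := by
  obtain ⟨σ⟩ := hsat
  intro M L N f g w hse
  have hπF : (F ⋙ π).essImage ≤ (ω' ⋙ F ⋙ π).essImage :=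
    adj'.essImage_le_essImage_rightAdjoint_comp _ fun x ↦
      isIso_map_of_isIso_map_of_isZero π' (F ⋙ π) hker (adj'.unit.app x)
  let j : ω.obj ((ω' ⋙ F ⋙ π).obj M) ≅ F.obj (ω'.obj M) :=
    σ.app (ω'.obj M) ≪≫ F.mapIso (ω'.mapIso (asIso (adj'.counit.app M)))
  have := hse.mono_f
  have := preservesMonomorphisms_of_adjunction adj
  have hL : F.essImage (ω.obj L) := hsub _ _ (ω.map f ≫ j.hom) inferInstance
  obtain ⟨y, ⟨e⟩⟩ : F.essImage (cokernel (ω.map f)) :=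
    hquot _ _ (j.inv ≫ cokernel.π (ω.map f)) inferInstance
  have eN : π.obj (F.obj y) ≅ N := π.mapIso e ≪≫ adj.leftAdjointObjCokernelMapIso f ≪≫
    (cokernelIsCokernel f).coconePointUniqueUpToIso hse.gIsCokernel
  exact ⟨hπF _ (adj.mem_essImage_comp_leftAdjoint F hL), hπF _ ⟨y, ⟨eN⟩⟩⟩

/-- If moreover `ω ∘ π ∘ F ≅ F ∘ ω' ∘ π'` and the essential image of `F` is
closed under subobjects and quotients, then the essential image of `i_* := π ∘ F ∘ ω'` is
closed under subobjects and quotients: for every short exact sequence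
`0 → L → i_* M → N → 0` in `𝒬`, both `L` and `N` lie in the essential image of `i_*`. -/
theorem stmt12
    -- 𝒞 is a Grothendieck abelian category
    (C : Type u) [Category.{v} C] [Abelian C] [HasColimits C] [AB5 C] [HasSeparator C]
    -- 𝒬 is a Grothendieck abelian category
    (Q : Type u) [Category.{v} Q] [Abelian Q] [HasColimits Q] [AB5 Q] [HasSeparator Q]
    -- 𝒞' is a Grothendieck abelian category
    (C' : Type u) [Category.{v} C'] [Abelian C'] [HasColimits C'] [AB5 C'] [HasSeparator C']
    -- 𝒬' is a Grothendieck abelian category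
    (Q' : Type u) [Category.{v} Q'] [Abelian Q'] [HasColimits Q'] [AB5 Q'] [HasSeparator Q']
    -- π : 𝒞 ⥤ 𝒬 is a Gabriel localization: exact with fully faithful right adjoint ω
    (π : C ⥤ Q) [π.Additive] [PreservesFiniteLimits π] [PreservesFiniteColimits π]
    (ω : Q ⥤ C) [ω.Full] [ω.Faithful] (adj : π ⊣ ω)
    -- π' : 𝒞' ⥤ 𝒬' is a Gabriel localization: exact with fully faithful right adjoint ω'
    (π' : C' ⥤ Q') [π'.Additive] [PreservesFiniteLimits π'] [PreservesFiniteColimits π']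
    (ω' : Q' ⥤ C') [ω'.Full] [ω'.Faithful] (adj' : π' ⊣ ω')
    -- F : 𝒞' ⥤ 𝒞 is exact and fully faithful
    (F : C' ⥤ C) [F.Additive] [PreservesFiniteLimits F] [PreservesFiniteColimits F]
    [F.Full] [F.Faithful]
    -- π ∘ F vanishes on the kernel of π'
    (hker : ∀ x : C', IsZero (π'.obj x) → IsZero (π.obj (F.obj x)))
    -- (ii) ω ∘ π ∘ F ≅ F ∘ ω' ∘ π' as functors 𝒞' ⥤ 𝒞
    (hsat : Nonempty (F ⋙ π ⋙ ω ≅ π' ⋙ ω' ⋙ F))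
    -- (iii) the essential image of F is closed under subobjects and quotient objects
    (hsub : ∀ (x : C') (L : C) (f : L ⟶ F.obj x), Mono f → F.essImage L)
    (hquot : ∀ (x : C') (N : C) (g : F.obj x ⟶ N), Epi g → F.essImage N) :
    ∀ (M : Q') (L N : Q) (f : L ⟶ (ω' ⋙ F ⋙ π).obj M) (g : (ω' ⋙ F ⋙ π).obj M ⟶ N)
      (w : f ≫ g = 0), (ShortComplex.mk f g w).ShortExact →
        (ω' ⋙ F ⋙ π).essImage L ∧ (ω' ⋙ F ⋙ π).essImage N :=
  stmt12_general C Q C' Q' π ω adj π' ω' adj' F hker hsat hsub hquot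
end

section
/- Let 𝒞 and 𝒞' be Grothendieck abelian categories, let π : 𝒞 → 𝒬 and π' : 𝒞' → 𝒬' be Gabriel localizations with fully faithful right adjoints ω and ω', and let F : 𝒞' → 𝒞 be an exact, fully faithful functor such that π(F(x)) ≅ 0 for every object x of 𝒞' with π'(x) ≅ 0. If F has a right adjoint H : 𝒞 → 𝒞', then the functor i_* := π∘F∘ω' : 𝒬' → 𝒬 has a right adjoint, namely i^! := π'∘H∘ω : 𝒬 → 𝒬'. -/
/-!
Write `W` for the morphisms of `𝒞'` inverted by `π'`. Since `π'` and `π ∘ F` are exact and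
`π ∘ F` kills the kernel of `π'`, the functor `π ∘ F` also inverts every morphism of `W`. Hence,
by the adjunction `π ∘ F ⊣ H ∘ ω`, every object `H (ω y)` is `W`-local. As `ω'` is fully faithful,
the unit `c ⟶ ω' (π' c)` lies in `W` and has a `W`-local target, so it is an isomorphism at every
`W`-local `c`. Thus `H ∘ ω` factors through `ω'` up to isomorphism, and restricting
`π ∘ F ⊣ H ∘ ω` along `ω'` gives `π ∘ F ∘ ω' ⊣ π' ∘ H ∘ ω`.
-/

open CategoryTheory CategoryTheory.Limits

universe v u

namespace CategoryTheory

section Abelian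

variable {A B B' : Type*} [Category A] [Category B] [Category B']
  [Abelian A] [Abelian B] [Abelian B']

lemma inverseImage_isomorphisms_le_of_isZero (G : A ⥤ B) (K : A ⥤ B')
    [PreservesFiniteLimits G] [PreservesFiniteColimits G]
    [PreservesFiniteLimits K] [PreservesFiniteColimits K]
    (hGK : ∀ x, IsZero (G.obj x) → IsZero (K.obj x)) :
    (MorphismProperty.isomorphisms B).inverseImage G ≤
      (MorphismProperty.isomorphisms B').inverseImage K := by
  intro X Y f (hf : IsIso (G.map f))
  show IsIso (K.map f)
  have hmono : Mono (K.map f) := Preadditive.mono_of_isZero_kernel _ <|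
    (hGK _ ((isZero_kernel_of_mono (G.map f)).of_iso (PreservesKernel.iso G f))).of_iso
      (PreservesKernel.iso K f).symm
  have hepi : Epi (K.map f) := Preadditive.epi_of_isZero_cokernel _ <|
    (hGK _ ((isZero_cokernel_of_epi (G.map f)).of_iso (PreservesCokernel.iso G f))).of_iso
      (PreservesCokernel.iso K f).symm
  exact isIso_of_mono_of_epi (K.map f)

end Abelian

variable {C D : Type*} [Category C] [Category D]

lemma Adjunction.isLocal_obj_inverseImage_isomorphisms {L : C ⥤ D} {R : D ⥤ C} (adj : L ⊣ R)
    (Z : D) : ((MorphismProperty.isomorphisms D).inverseImage L).isLocal (R.obj Z) := by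
  intro X Y f (hf : IsIso (L.map f))
  have hcomp : (fun g : Y ⟶ R.obj Z ↦ f ≫ g) =
      adj.homEquiv X Z ∘ (fun g ↦ L.map f ≫ g) ∘ (adj.homEquiv Y Z).symm := by
    ext g
    simp [← Adjunction.homEquiv_naturality_left_symm]
  rw [hcomp]
  exact (adj.homEquiv X Z).bijective.comp
    ((ObjectProperty.isLocal_of_isIso ⊤ (L.map f) Z trivial).comp
      (adj.homEquiv Y Z).symm.bijective)

lemma Adjunction.isIso_unit_app_of_isLocal {L : C ⥤ D} {R : D ⥤ C} (adj : L ⊣ R)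
    [R.Full] [R.Faithful] {X : C}
    (hX : ((MorphismProperty.isomorphisms D).inverseImage L).isLocal X) :
    IsIso (adj.unit.app X) := by
  have hunit : ((MorphismProperty.isomorphisms D).inverseImage L) (adj.unit.app X) :=
    (ObjectProperty.isLocal_iff_isIso_map adj _).1 (ObjectProperty.isLocal_adj_unit_app adj X)
  exact (ObjectProperty.isLocal_iff_isIso _ _ hX (adj.isLocal_obj_inverseImage_isomorphisms _)).1
    (MorphismProperty.le_isLocal_isLocal _ _ hunit)

end CategoryTheory

theorem stmt13_general
    -- 𝒞 is a Grothendieck abelian category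
    (C : Type u) [Category.{v} C] [Abelian C]
    -- 𝒬 is a Grothendieck abelian category
    (Q : Type u) [Category.{v} Q] [Abelian Q]
    -- 𝒞' is a Grothendieck abelian category
    (C' : Type u) [Category.{v} C'] [Abelian C']
    -- 𝒬' is a Grothendieck abelian category
    (Q' : Type u) [Category.{v} Q'] [Abelian Q']
    -- π : 𝒞 ⥤ 𝒬 is a Gabriel localization: exact with fully faithful right adjoint ω
    (π : C ⥤ Q) [PreservesFiniteLimits π] [PreservesFiniteColimits π]
    (ω : Q ⥤ C) (adj : π ⊣ ω)
    -- π' : 𝒞' ⥤ 𝒬' is a Gabriel localization: exact with fully faithful right adjoint ω'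
    (π' : C' ⥤ Q') [PreservesFiniteLimits π'] [PreservesFiniteColimits π']
    (ω' : Q' ⥤ C') [ω'.Full] [ω'.Faithful] (adj' : π' ⊣ ω')
    -- F : 𝒞' ⥤ 𝒞 is exact and fully faithful
    (F : C' ⥤ C) [PreservesFiniteLimits F] [PreservesFiniteColimits F]
    -- π ∘ F vanishes on the kernel of π'
    (hker : ∀ x : C', IsZero (π'.obj x) → IsZero (π.obj (F.obj x)))
    -- F has a right adjoint H
    (H : C ⥤ C') (adjFH : F ⊣ H) :
    Nonempty ((ω' ⋙ F ⋙ π) ⊣ (ω ⋙ H ⋙ π')) := by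
  have hlocal : ∀ y, IsIso (adj'.unit.app (H.obj (ω.obj y))) := fun y ↦
    adj'.isIso_unit_app_of_isLocal <|
      MorphismProperty.isLocal_antitone (inverseImage_isomorphisms_le_of_isZero π' (F ⋙ π) hker)
        _ ((adjFH.comp adj).isLocal_obj_inverseImage_isomorphisms y)
  have : IsIso (Functor.whiskerLeft (ω ⋙ H) adj'.unit) :=
    (NatTrans.isIso_iff_isIso_app _).2 hlocal
  exact ⟨(adjFH.comp adj).restrictFullyFaithful (.ofFullyFaithful ω') (.id Q)
    (Functor.rightUnitor _).symm (asIso (Functor.whiskerLeft (ω ⋙ H) adj'.unit))⟩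

/-- If `F ⊣ H` (i.e. `F` has a right adjoint `H`), then
`i_* := π ∘ F ∘ ω'` has right adjoint `i^! := π' ∘ H ∘ ω`. -/
theorem stmt13
    -- 𝒞 is a Grothendieck abelian category
    (C : Type u) [Category.{v} C] [Abelian C] [HasColimits C] [AB5 C] [HasSeparator C]
    -- 𝒬 is a Grothendieck abelian category
    (Q : Type u) [Category.{v} Q] [Abelian Q] [HasColimits Q] [AB5 Q] [HasSeparator Q]
    -- 𝒞' is a Grothendieck abelian category
    (C' : Type u) [Category.{v} C'] [Abelian C'] [HasColimits C'] [AB5 C'] [HasSeparator C']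
    -- 𝒬' is a Grothendieck abelian category
    (Q' : Type u) [Category.{v} Q'] [Abelian Q'] [HasColimits Q'] [AB5 Q'] [HasSeparator Q']
    -- π : 𝒞 ⥤ 𝒬 is a Gabriel localization: exact with fully faithful right adjoint ω
    (π : C ⥤ Q) [π.Additive] [PreservesFiniteLimits π] [PreservesFiniteColimits π]
    (ω : Q ⥤ C) [ω.Full] [ω.Faithful] (adj : π ⊣ ω)
    -- π' : 𝒞' ⥤ 𝒬' is a Gabriel localization: exact with fully faithful right adjoint ω'
    (π' : C' ⥤ Q') [π'.Additive] [PreservesFiniteLimits π'] [PreservesFiniteColimits π']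
    (ω' : Q' ⥤ C') [ω'.Full] [ω'.Faithful] (adj' : π' ⊣ ω')
    -- F : 𝒞' ⥤ 𝒞 is exact and fully faithful
    (F : C' ⥤ C) [F.Additive] [PreservesFiniteLimits F] [PreservesFiniteColimits F]
    [F.Full] [F.Faithful]
    -- π ∘ F vanishes on the kernel of π'
    (hker : ∀ x : C', IsZero (π'.obj x) → IsZero (π.obj (F.obj x)))
    -- F has a right adjoint H
    (H : C ⥤ C') (adjFH : F ⊣ H) :
    Nonempty ((ω' ⋙ F ⋙ π) ⊣ (ω ⋙ H ⋙ π')) :=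
  stmt13_general C Q C' Q' π ω adj π' ω' adj' F hker H adjFH
end
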